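/- arXiv:2509.22898 — 8 statements merged into one kernel-verified Lean document; each statement's English description precedes it below -/
import Mathlib

section
/- In a systematic q-ary Hamming code Ham(r,q), every minimum (inclusion-minimal) recovery set for a data symbol has cardinality either 1 or q^{r−1} − 1. -/
/-- `R` is a recovery set for data symbol `i` with respect to the generator matrix `G`:
the standard basis vector `e_i` lies in the span of the columns of `G` indexed by `R`. -/
def IsRecoverySet {k n : ℕ} {F : Type*} [Field F] (G : Matrix (Fin k) (Fin n) F)
    (i : Fin k) (R : Finset (Fin n)) : Prop :=
  (Pi.single i 1 : Fin k → F) ∈ Submodule.span F ((fun j => fun a => G a j) '' (R : Set (Fin n)))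

/-- `R` is a minimum (inclusion-minimal) recovery set for data symbol `i`. -/
def IsMinRecoverySet {k n : ℕ} {F : Type*} [Field F] (G : Matrix (Fin k) (Fin n) F)
    (i : Fin k) (R : Finset (Fin n)) : Prop :=
  IsRecoverySet G i R ∧ ∀ R' : Finset (Fin n), R' ⊂ R → ¬ IsRecoverySet G i R'

/-! A minimal recovery set for `e_i` either contains a systematic column equal to `e_i`, and is
then that singleton, or, together with that column, it is the support of a dual codeword: the
coefficients expressing `e_i` minus the indicator of the systematic column. A dual codeword of
`Ham(r,q)` is `(ψ (H.col j))_j` for a functional `ψ ≠ 0`, and since `(j, a) ↦ a • H.col j` with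
`a ≠ 0` enumerates `F^r \ {0}` once, `q - 1` times its weight counts the `q^r - q^(r-1)` vectors
off the hyperplane `ker ψ`. -/

open Finset

theorem card_filter_sub_single_ne_zero {α M : Type*} [Fintype α] [DecidableEq α] [AddGroup M]
    [DecidableEq M] (l : α →₀ M) {j₀ : α} (hj₀ : j₀ ∉ l.support) {c : M} (hc : c ≠ 0) :
    #{j | (⇑l - Pi.single j₀ c : α → M) j ≠ 0} = #l.support + 1 := by
  rw [← card_insert_of_notMem hj₀]
  congr 1
  ext j
  rcases eq_or_ne j j₀ with rfl | hj
  · simpa [Finsupp.notMem_support_iff.mp hj₀] using hc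
  · simp [hj]

section Recovery

variable {k n : ℕ} {F : Type*} [Field F] {G : Matrix (Fin k) (Fin n) F} {i : Fin k}
  {R : Finset (Fin n)}

theorem IsMinRecoverySet.eq_singleton_of_mem (hR : IsMinRecoverySet G i R) {j : Fin n}
    (hj : G.col j = Pi.single i 1) (hjR : j ∈ R) : R = {j} := by
  by_contra hne
  exact hR.2 {j} (Finset.ssubset_iff_subset_ne.mpr ⟨singleton_subset_iff.mpr hjR, Ne.symm hne⟩)
    (Submodule.subset_span ⟨j, mem_singleton_self j, hj⟩)

theorem IsMinRecoverySet.exists_support_eq (hR : IsMinRecoverySet G i R) :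
    ∃ l : Fin n →₀ F, l.support = R ∧
      Finsupp.linearCombination F G.col l = Pi.single i 1 := by
  obtain ⟨l, hlR, hl⟩ := (Finsupp.mem_span_image_iff_linearCombination F).mp hR.1
  have hsub : l.support ⊆ R := Finset.coe_subset.mp ((Finsupp.mem_supported F l).mp hlR)
  refine ⟨l, ?_, hl⟩
  by_contra hne
  exact hR.2 l.support (Finset.ssubset_iff_subset_ne.mpr ⟨hsub, hne⟩)
    ((Finsupp.mem_span_image_iff_linearCombination F).mpr
      ⟨l, Finsupp.mem_supported_support F l, hl⟩)

theorem dotProduct_sub_single_eq_zero_of_mem_span {l : Fin n →₀ F}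
    (hl : Finsupp.linearCombination F G.col l = Pi.single i 1) {j₀ : Fin n}
    (hj₀ : G.col j₀ = Pi.single i 1) :
    ∀ w ∈ Submodule.span F (Set.range G), (⇑l - Pi.single j₀ 1) ⬝ᵥ w = 0 := by
  intro w hw
  induction hw using Submodule.span_induction with
  | mem _ hw =>
    obtain ⟨a, rfl⟩ := hw
    have hla : l ⬝ᵥ G a = (Pi.single i 1 : Fin k → F) a := by
      rw [← hl, Finsupp.linearCombination_apply, Finsupp.sum_fintype _ _ (by simp),
        Finset.sum_apply]
      simp [dotProduct]
    rw [sub_dotProduct, hla, single_one_dotProduct, ← hj₀]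
    exact sub_self _
  | zero => exact dotProduct_zero _
  | add _ _ _ _ hv hw => rw [dotProduct_add, hv, hw, add_zero]
  | smul c _ _ hv => rw [dotProduct_smul, hv, smul_zero]

end Recovery

theorem Module.Dual.card_filter_ne_zero {F V : Type*} [Field F] [Fintype F] [DecidableEq F]
    [AddCommGroup V] [Module F V] [Fintype V] {ψ : Module.Dual F V} (hψ : ψ ≠ 0) :
    #{v | ψ v ≠ 0} = Fintype.card F ^ (Module.finrank F V - 1) * (Fintype.card F - 1) := by
  have hrank : Module.finrank F (LinearMap.ker ψ) + 1 = Module.finrank F V := by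
    have := LinearMap.finrank_range_add_finrank_ker ψ
    rw [LinearMap.range_eq_top.mpr (LinearMap.surjective_of_ne_zero hψ), finrank_top,
      Module.finrank_self] at this
    omega
  have hker : #{v | ψ v = 0} = Fintype.card F ^ Module.finrank F (LinearMap.ker ψ) := by
    rw [← Nat.card_eq_fintype_card, ← Module.natCard_eq_pow_finrank, ← Fintype.card_subtype,
      ← Nat.card_eq_fintype_card]
    rfl
  have htotal := card_filter_add_card_filter_not (s := univ) (fun v => ψ v = 0)
  rw [hker, card_univ, Module.card_eq_pow_finrank (K := F) (V := V), ← hrank] at htotal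
  rw [← hrank, Nat.add_sub_cancel, Nat.mul_sub_one, ← pow_succ]
  simp only [ne_eq]
  omega

section HammingCode

variable {r n : ℕ} {F : Type*} [Field F] [Fintype F] [DecidableEq F]
  {H : Matrix (Fin r) (Fin n) F}

theorem card_filter_ne_zero_eq_card_filter_col_ne_zero_mul
    (hnz : ∀ j, H.col j ≠ 0) (hrep : ∀ v ≠ 0, ∃ j, ∃ a : F, v = a • H.col j)
    (hinj : ∀ j j' (a : F), H.col j = a • H.col j' → j = j')
    (ψ : Module.Dual F (Fin r → F)) :
    #{v | ψ v ≠ 0} = #{j | ψ (H.col j) ≠ 0} * (Fintype.card F - 1) := by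
  rw [← card_univ, ← card_erase_of_mem (mem_univ 0), ← card_product]
  symm
  refine card_bij (fun p _ => p.2 • H.col p.1) ?_ ?_ ?_
  · rintro ⟨j, a⟩ hp
    simp only [mem_product, mem_filter, mem_univ, true_and, mem_erase] at hp ⊢
    rw [map_smul, smul_eq_mul]
    exact mul_ne_zero hp.2.1 hp.1
  · rintro ⟨j, a⟩ hp ⟨j', a'⟩ hp' heq
    simp only [mem_product, mem_filter, mem_univ, true_and, mem_erase] at hp hp'
    obtain rfl : j = j' := hinj j j' (a⁻¹ * a') (by rw [mul_smul, ← heq, inv_smul_smul₀ hp.2.1])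
    obtain rfl : a = a' := smul_left_injective F (hnz j) heq
    rfl
  · intro v hv
    simp only [mem_filter, mem_univ, true_and] at hv
    obtain ⟨j, a, rfl⟩ := hrep v (fun h => hv (by rw [h, map_zero]))
    rw [map_smul, smul_eq_mul] at hv
    exact ⟨(j, a), by simp [left_ne_zero_of_mul hv, right_ne_zero_of_mul hv], rfl⟩

theorem card_filter_col_ne_zero
    (hnz : ∀ j, H.col j ≠ 0) (hrep : ∀ v ≠ 0, ∃ j, ∃ a : F, v = a • H.col j)
    (hinj : ∀ j j' (a : F), H.col j = a • H.col j' → j = j')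
    {ψ : Module.Dual F (Fin r → F)} (hψ : ψ ≠ 0) :
    #{j | ψ (H.col j) ≠ 0} = Fintype.card F ^ (r - 1) := by
  refine Nat.eq_of_mul_eq_mul_right (Nat.sub_pos_of_lt (Fintype.one_lt_card (α := F))) ?_
  rw [← card_filter_ne_zero_eq_card_filter_col_ne_zero_mul hnz hrep hinj,
    Module.Dual.card_filter_ne_zero hψ, Module.finrank_fin_fun]

theorem card_filter_ne_zero_of_forall_mem_ker_dotProduct_eq_zero
    (hnz : ∀ j, H.col j ≠ 0) (hrep : ∀ v ≠ 0, ∃ j, ∃ a : F, v = a • H.col j)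
    (hinj : ∀ j j' (a : F), H.col j = a • H.col j' → j = j')
    {x : Fin n → F} (hx : x ≠ 0) (horth : ∀ w ∈ LinearMap.ker H.mulVecLin, x ⬝ᵥ w = 0) :
    #{j | x j ≠ 0} = Fintype.card F ^ (r - 1) := by
  obtain ⟨ψ, hψ⟩ : dotProductEquiv F (Fin n) x ∈ LinearMap.range H.mulVecLin.dualMap := by
    rw [LinearMap.range_dualMap_eq_dualAnnihilator_ker, Submodule.mem_dualAnnihilator]
    exact horth
  have hcol : ∀ j, ψ (H.col j) = x j := fun j => by
    simpa [Matrix.mulVec_single_one] using LinearMap.congr_fun hψ (Pi.single j 1)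
  have hψ0 : ψ ≠ 0 := by
    rintro rfl
    exact hx (funext fun j => by simp [← hcol j])
  simp_rw [← hcol]
  exact card_filter_col_ne_zero hnz hrep hinj hψ0

end HammingCode

theorem stmt3_general {r n k : ℕ} {F : Type*} [Field F] [Fintype F]
    (H : Matrix (Fin r) (Fin n) F)
    (hnz : ∀ j : Fin n, (fun a => H a j) ≠ (0 : Fin r → F))
    (hrep : ∀ v : Fin r → F, v ≠ 0 → ∃ (j : Fin n) (a : F), v = a • fun b => H b j)
    (hinj : ∀ (j j' : Fin n) (a : F), (fun b => H b j) = a • (fun b => H b j') → j = j')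
    (G : Matrix (Fin k) (Fin n) F)
    (hspan : Submodule.span F (Set.range G) = LinearMap.ker H.mulVecLin)
    (hsys : ∀ a : Fin k, ∃ j : Fin n, (fun b => G b j) = Pi.single a 1)
    (i : Fin k) (R : Finset (Fin n)) (hR : IsMinRecoverySet G i R) :
    R.card = 1 ∨ R.card = Fintype.card F ^ (r - 1) - 1 := by
  classical
  obtain ⟨j₀, hj₀⟩ := hsys i
  by_cases hj₀R : j₀ ∈ R
  · exact Or.inl (by rw [hR.eq_singleton_of_mem hj₀ hj₀R, card_singleton])
  right
  obtain ⟨l, rfl, hl⟩ := hR.exists_support_eq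
  have hsupp := card_filter_sub_single_ne_zero l hj₀R one_ne_zero
  have hx : ⇑l - Pi.single j₀ 1 ≠ 0 := fun h => by
    simpa [Finsupp.notMem_support_iff.mp hj₀R] using congrFun h j₀
  have horth := dotProduct_sub_single_eq_zero_of_mem_span hl hj₀
  rw [hspan] at horth
  have hweight := card_filter_ne_zero_of_forall_mem_ker_dotProduct_eq_zero hnz hrep hinj hx horth
  omega

/-- In a systematic `q`-ary Hamming code `Ham(r,q)` (parity-check matrix `H`
with one nonzero column from each one-dimensional subspace of `F_q^r`, systematic generator
matrix `G` whose rows span the kernel of `H`), every minimum recovery set for a data symbol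
has cardinality either `1` or `q^(r-1) - 1`. -/
theorem stmt3 {r n k : ℕ} {F : Type*} [Field F] [Fintype F] [DecidableEq F]
    (hr : 2 ≤ r)
    (hn : n = (Fintype.card F ^ r - 1) / (Fintype.card F - 1))
    (hk : k = (Fintype.card F ^ r - 1) / (Fintype.card F - 1) - r)
    (H : Matrix (Fin r) (Fin n) F)
    (hnz : ∀ j : Fin n, (fun a => H a j) ≠ (0 : Fin r → F))
    (hrep : ∀ v : Fin r → F, v ≠ 0 → ∃ (j : Fin n) (a : F), v = a • fun b => H b j)
    (hinj : ∀ (j j' : Fin n) (a : F), (fun b => H b j) = a • (fun b => H b j') → j = j')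
    (G : Matrix (Fin k) (Fin n) F)
    (hspan : Submodule.span F (Set.range G) = LinearMap.ker H.mulVecLin)
    (hsys : ∀ a : Fin k, ∃ j : Fin n, (fun b => G b j) = Pi.single a 1)
    (i : Fin k) (R : Finset (Fin n)) (hR : IsMinRecoverySet G i R) :
    R.card = 1 ∨ R.card = Fintype.card F ^ (r - 1) - 1 :=
  stmt3_general H hnz hrep hinj G hspan hsys i R hR
end

section
/- In the service rate region of any binary code with generator matrix G having O_w columns of odd weight and unit server capacities, every achievable demand vector (λ_1,…,λ_k) satisfies λ_1 + ⋯ + λ_k ≤ O_w. -/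
/-- The demand vector `lam` is achievable for the storage system encoded by `G` with unit
server capacities: there is a nonnegative allocation of each demand `lam i` over the recovery
sets of symbol `i` such that every node serves total load at most `1`. -/
def Achievable {k n : ℕ} {F : Type*} [Field F] (G : Matrix (Fin k) (Fin n) F)
    (lam : Fin k → ℝ) : Prop :=
  ∃ w : Fin k → Finset (Fin n) → ℝ,
    (∀ i R, 0 ≤ w i R) ∧
    (∀ i R, w i R ≠ 0 → IsRecoverySet G i R) ∧
    (∀ i, ∑ R : Finset (Fin n), w i R = lam i) ∧
    (∀ v : Fin n, (∑ i : Fin k, ∑ R : Finset (Fin n), if v ∈ R then w i R else 0) ≤ 1)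

lemma sum_col_eq {k n : ℕ} (G : Matrix (Fin k) (Fin n) (ZMod 2)) (j : Fin n) :
    (∑ a, G a j) = ((hammingNorm fun a => G a j : ℕ) : ZMod 2) := by
  have h1 : ∀ x : ZMod 2, x ≠ 0 → x = 1 := by decide
  rw [← Finset.sum_filter_ne_zero,
    Finset.sum_congr rfl fun a ha => h1 _ (Finset.mem_filter.mp ha).2,
    Finset.sum_const, nsmul_eq_mul, mul_one]
  rfl

/-- Every recovery set contains a column of odd weight. -/
lemma exists_odd_col {k n : ℕ} (G : Matrix (Fin k) (Fin n) (ZMod 2)) {i : Fin k}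
    {R : Finset (Fin n)} (hR : IsRecoverySet G i R) :
    ∃ v ∈ R, Odd (hammingNorm fun a => G a v) := by
  by_contra hc
  push_neg at hc
  let f : (Fin k → ZMod 2) →ₗ[ZMod 2] ZMod 2 :=
    { toFun := fun x => ∑ a, x a
      map_add' := fun x y => by simp [Finset.sum_add_distrib]
      map_smul' := fun c x => by simp [Finset.mul_sum] }
  have hle : Submodule.span (ZMod 2) ((fun j => fun a => G a j) '' (R : Set (Fin n)))
      ≤ LinearMap.ker f := by
    rw [Submodule.span_le]
    rintro _ ⟨j, hj, rfl⟩
    simp only [SetLike.mem_coe, LinearMap.mem_ker]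
    show (∑ a, G a j) = 0
    rw [sum_col_eq]
    have h2 : (2 : ℕ) ∣ hammingNorm fun a => G a j := by
      have := hc j hj
      rwa [Nat.odd_iff, ← Nat.two_dvd_ne_zero, not_not] at this
    rwa [ZMod.natCast_eq_zero_iff]
  have : f (Pi.single i 1) = 0 := hle hR
  have h1 : f (Pi.single i 1) = 1 := by
    show (∑ a, Pi.single i 1 a) = 1
    simp [Finset.sum_pi_single]
  rw [h1] at this
  exact one_ne_zero this

/-- For a binary code with generator matrix `G` having `O_w` columns of odd
weight and unit server capacities, every achievable demand vector `(λ_1, …, λ_k)` satisfies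
`λ_1 + ⋯ + λ_k ≤ O_w`. -/
theorem stmt9 {k n : ℕ} (G : Matrix (Fin k) (Fin n) (ZMod 2))
    (lam : Fin k → ℝ) (h : Achievable G lam) :
    ∑ i : Fin k, lam i ≤
      ((Finset.univ.filter fun j : Fin n => Odd (hammingNorm fun a => G a j)).card : ℝ) := by
  obtain ⟨w, hw0, hwrec, hwsum, hwcap⟩ := h
  set O := Finset.univ.filter fun j : Fin n => Odd (hammingNorm fun a => G a j) with hO
  calc ∑ i, lam i = ∑ i, ∑ R : Finset (Fin n), w i R := by
        exact Finset.sum_congr rfl fun i _ => (hwsum i).symm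
    _ ≤ ∑ i, ∑ R : Finset (Fin n), ∑ v ∈ O, (if v ∈ R then w i R else 0) := by
        refine Finset.sum_le_sum fun i _ => Finset.sum_le_sum fun R _ => ?_
        by_cases hz : w i R = 0
        · rw [hz]
          exact Finset.sum_nonneg fun v _ => by positivity
        · obtain ⟨v, hvR, hvodd⟩ := exists_odd_col G (hwrec i R hz)
          have hvO : v ∈ O := Finset.mem_filter.mpr ⟨Finset.mem_univ v, hvodd⟩
          have key : (if v ∈ R then w i R else 0) ≤ ∑ u ∈ O, (if u ∈ R then w i R else 0) := by
            refine Finset.single_le_sum (f := fun u => if u ∈ R then w i R else 0) ?_ hvO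
            intro u _
            by_cases hu : u ∈ R <;> simp [hu, hw0 i R]
          simpa [hvR] using key
    _ = ∑ v ∈ O, ∑ i, ∑ R : Finset (Fin n), (if v ∈ R then w i R else 0) := by
        have h1 : ∀ i : Fin k, (∑ R : Finset (Fin n), ∑ v ∈ O, if v ∈ R then w i R else 0)
            = ∑ v ∈ O, ∑ R : Finset (Fin n), (if v ∈ R then w i R else 0) :=
          fun i => Finset.sum_comm
        rw [Finset.sum_congr rfl fun i _ => h1 i, Finset.sum_comm]
    _ ≤ ∑ v ∈ O, 1 := Finset.sum_le_sum fun v _ => hwcap v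
    _ = (O.card : ℝ) := by simp
end

section
/- For the systematic binary Hamming code Ham(3,2) (the [7,4,3] code), every achievable demand vector satisfies λ_1 + λ_2 + λ_3 + λ_4 ≤ 5, and the demand vector (with total 5) obtained by serving each symbol once via its systematic node plus one extra request via the recovery set consisting of the three parity nodes is achievable. -/
/-- The set of "good" values: nonzero vectors that are not standard basis vectors. -/
def goodSet : Finset (Fin 3 → ZMod 2) :=
  Finset.univ.filter (fun x => x ≠ 0 ∧ ∀ k, x ≠ Pi.single k 1)

lemma goodSet_card : goodSet.card = 4 := by decide

lemma one_mem_goodSet : (fun _ => (1 : ZMod 2)) ∈ goodSet := by decide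

lemma goodSet_sum_eq_zero : ∀ x ∈ goodSet, x ≠ (fun _ => (1 : ZMod 2)) → ∑ k, x k = 0 := by
  decide

lemma goodSet_sum_one : ∑ _k : Fin 3, (1 : ZMod 2) = 1 := by decide

lemma goodSet_no_unique : ∀ c : Fin 3 → ZMod 2, c 0 = 0 →
    ¬ ∃ z, z ∈ goodSet ∧ ∀ x ∈ goodSet, ((∑ k, c k * x k) = 1 ↔ x = z) := by
  decide

lemma zmod2_add_eq_zero : ∀ x y : ZMod 2, x + y = 0 → x = y := by decide

lemma zmod2_card_ne : Fintype.card {v : Fin 3 → ZMod 2 // v ≠ 0} = 7 := by decide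

/-- For the systematic binary Hamming code `Ham(3,2)` (the `[7,4,3]` code),
every achievable demand vector satisfies `λ_1 + λ_2 + λ_3 + λ_4 ≤ 5`, and the demand vector of
total `5` obtained by serving each symbol once via its systematic node plus one extra request
for the symbol `a` recovered by the set of the three parity (non-systematic) nodes is
achievable. -/
theorem stmt11
    (H : Matrix (Fin 3) (Fin 7) (ZMod 2))
    (hcols : ∀ v : Fin 3 → ZMod 2, v ≠ 0 → ∃! j : Fin 7, (fun a => H a j) = v)
    (G : Matrix (Fin 4) (Fin 7) (ZMod 2))
    (hspan : Submodule.span (ZMod 2) (Set.range G) = LinearMap.ker H.mulVecLin)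
    (S : Fin 4 → Fin 7)
    (hS : ∀ a : Fin 4, (fun b => G b (S a)) = Pi.single a 1) :
    (∀ lam : Fin 4 → ℝ, Achievable G lam → ∑ i : Fin 4, lam i ≤ 5) ∧
      ∃ a : Fin 4,
        IsRecoverySet G a (Finset.univ \ Finset.image S Finset.univ) ∧
        Achievable G (fun i => if i = a then 2 else 1) := by
  classical
  -- columns of H are nonzero and pairwise distinct
  have hne : ∀ j : Fin 7, (fun a => H a j) ≠ 0 := by
    have hi : Function.Injective
        (fun v : {v : Fin 3 → ZMod 2 // v ≠ 0} => (hcols v.1 v.2).choose) := by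
      intro v w hvw
      apply Subtype.ext
      have h1 := (hcols v.1 v.2).choose_spec.1
      have h2 := (hcols w.1 w.2).choose_spec.1
      simp only at hvw
      rw [← h1, ← h2, hvw]
    have hsurj : Function.Surjective
        (fun v : {v : Fin 3 → ZMod 2 // v ≠ 0} => (hcols v.1 v.2).choose) :=
      ((Fintype.bijective_iff_injective_and_card _).2 ⟨hi, by rw [zmod2_card_ne]; rfl⟩).2
    intro j
    obtain ⟨v, hv⟩ := hsurj j
    simp only at hv
    have h1 := (hcols v.1 v.2).choose_spec.1
    rw [hv] at h1
    rw [h1]; exact v.2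
  have hinj : ∀ j j' : Fin 7, (fun a => H a j) = (fun a => H a j') → j = j' := by
    intro j j' e
    exact (hcols _ (hne j)).unique rfl e.symm
  -- S is injective
  have hSinj : Function.Injective S := by
    intro a b e
    by_contra hab
    have h1 : (Pi.single a 1 : Fin 4 → ZMod 2) = Pi.single b 1 := by
      rw [← hS a, ← hS b, e]
    have h2 := congrFun h1 a
    rw [Pi.single_eq_same, Pi.single_eq_of_ne hab] at h2
    exact absurd h2 one_ne_zero
  have hcardim : (Finset.image S Finset.univ).card = 4 := by
    rw [Finset.card_image_of_injective _ hSinj, Finset.card_univ]; rfl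
  set Pf : Finset (Fin 7) := Finset.univ \ Finset.image S Finset.univ with hPf
  have hcardP : Pf.card = 3 := by
    rw [hPf, Finset.card_sdiff_of_subset (Finset.subset_univ _), hcardim, Finset.card_univ]; rfl
  -- enumeration of the parity nodes
  set p : Fin 3 → Fin 7 := fun k => ((Pf.orderIsoOfFin hcardP) k : Fin 7) with hp
  have pmem : ∀ k, p k ∈ Pf := fun k => ((Pf.orderIsoOfFin hcardP) k).2
  have pinj : Function.Injective p := fun k k' e =>
    (Pf.orderIsoOfFin hcardP).injective (Subtype.ext e)
  have pim : Finset.image p Finset.univ = Pf := by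
    apply Finset.eq_of_subset_of_card_le
    · intro x hx
      obtain ⟨k, -, rfl⟩ := Finset.mem_image.1 hx
      exact pmem k
    · rw [hcardP, Finset.card_image_of_injective _ pinj, Finset.card_univ]
      simp
  have pnotS : ∀ k, p k ∉ Finset.image S Finset.univ := fun k =>
    (Finset.mem_sdiff.1 (pmem k)).2
  -- rows of G are codewords
  have hrow : ∀ (b : Fin 4) (c : Fin 3), ∑ j, H c j * G b j = 0 := by
    intro b c
    have h1 : G b ∈ LinearMap.ker H.mulVecLin := by
      rw [← hspan]; exact Submodule.subset_span ⟨b, rfl⟩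
    have h2 := congrFun (LinearMap.mem_ker.1 h1) c
    simpa [Matrix.mulVecLin_apply, Matrix.mulVec, dotProduct] using h2
  -- systematic entries
  have hGS : ∀ (b a : Fin 4), G b (S a) = if b = a then 1 else 0 := by
    intro b a
    have := congrFun (hS a) b
    rwa [Pi.single_apply] at this
  -- key identity: h (S b) = sum over parity columns weighted by G b (p k)
  have key : ∀ (b : Fin 4) (c : Fin 3), H c (S b) = ∑ k, G b (p k) * H c (p k) := by
    intro b c
    have hsplit := Finset.sum_sdiff (f := fun j => H c j * G b j)
      (Finset.subset_univ (Finset.image S Finset.univ))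
    rw [hrow b c] at hsplit
    have h1 : ∑ j ∈ Finset.image S Finset.univ, H c j * G b j = H c (S b) := by
      rw [Finset.sum_image (fun a _ a' _ e => hSinj e)]
      have : ∀ a : Fin 4, H c (S a) * G b (S a) = if a = b then H c (S a) else 0 := by
        intro a
        rw [hGS b a]
        by_cases hab : a = b
        · subst hab; simp
        · rw [if_neg (fun h => hab h.symm), mul_zero, if_neg hab]
      rw [Finset.sum_congr rfl (fun a _ => this a), Finset.sum_ite_eq' Finset.univ b]
      simp
    have h2 : ∑ j ∈ Finset.univ \ Finset.image S Finset.univ, H c j * G b j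
        = ∑ k, G b (p k) * H c (p k) := by
      rw [← hPf, ← pim, Finset.sum_image (fun k _ k' _ e => pinj e)]
      exact Finset.sum_congr rfl (fun k _ => mul_comm _ _)
    rw [h1, h2] at hsplit
    exact (zmod2_add_eq_zero _ _ hsplit).symm
  -- the restricted rows are "good"
  have rgood : ∀ b : Fin 4, (fun k => G b (p k)) ∈ goodSet := by
    intro b
    rw [goodSet, Finset.mem_filter]
    refine ⟨Finset.mem_univ _, ?_, ?_⟩
    · intro h0
      apply hne (S b)
      funext c
      have : H c (S b) = ∑ k, G b (p k) * H c (p k) := key b c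
      rw [this]
      apply Finset.sum_eq_zero
      intro k _
      have : G b (p k) = 0 := congrFun h0 k
      rw [this, zero_mul]
    · intro k0 hk0
      have heq : (fun a => H a (S b)) = (fun a => H a (p k0)) := by
        funext c
        rw [key b c]
        have : ∀ k : Fin 3, G b (p k) * H c (p k) = if k = k0 then H c (p k) else 0 := by
          intro k
          have := congrFun hk0 k
          rw [this, Pi.single_apply]
          by_cases h : k = k0 <;> simp [h]
        rw [Finset.sum_congr rfl (fun k _ => this k), Finset.sum_ite_eq' Finset.univ k0]
        simp
      have := hinj _ _ heq
      exact pnotS k0 (this ▸ Finset.mem_image_of_mem S (Finset.mem_univ b))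
  have rinj : ∀ b b' : Fin 4, (fun k => G b (p k)) = (fun k => G b' (p k)) → b = b' := by
    intro b b' e
    apply hSinj
    apply hinj
    funext c
    rw [key b c, key b' c]
    exact Finset.sum_congr rfl (fun k _ => by rw [congrFun e k])
  -- image of rows equals goodSet
  have imgeq : Finset.image (fun b => fun k => G b (p k)) Finset.univ = goodSet := by
    apply Finset.eq_of_subset_of_card_le
    · intro x hx
      obtain ⟨b, -, rfl⟩ := Finset.mem_image.1 hx
      exact rgood b
    · rw [goodSet_card, Finset.card_image_of_injective _ (fun b b' e => rinj b b' e),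
        Finset.card_univ]
      simp
  -- the special symbol a
  obtain ⟨a, -, ha⟩ := Finset.mem_image.1 (imgeq ▸ one_mem_goodSet)
  -- recovery set: sum of the three parity columns equals e_a
  have hsum3 : (Pi.single a 1 : Fin 4 → ZMod 2)
      = (fun b => G b (p 0)) + ((fun b => G b (p 1)) + (fun b => G b (p 2))) := by
    funext b
    have hs : ((fun b => G b (p 0)) + ((fun b => G b (p 1)) + (fun b => G b (p 2)))) b
        = ∑ k, G b (p k) := by
      simp [Fin.sum_univ_three, add_assoc]
    rw [hs, Pi.single_apply]
    by_cases hba : b = a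
    · subst hba
      rw [if_pos rfl]
      have : ∀ k : Fin 3, G b (p k) = 1 := fun k => congrFun ha k
      rw [Finset.sum_congr rfl (fun k _ => this k)]
      exact goodSet_sum_one
    · rw [if_neg hba]
      refine (goodSet_sum_eq_zero _ (rgood b) ?_).symm
      intro h1
      exact hba (rinj b a (h1.trans ha.symm))
  have hrec : IsRecoverySet G a Pf := by
    rw [IsRecoverySet, hsum3]
    refine Submodule.add_mem _ ?_ (Submodule.add_mem _ ?_ ?_) <;>
      exact Submodule.subset_span ⟨p _, by simpa using pmem _, rfl⟩
  -- the vertex cover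
  set C : Finset (Fin 7) := insert (p 0) (Finset.image S Finset.univ) with hC
  have hCcard : C.card = 5 := by
    rw [hC, Finset.card_insert_of_notMem (pnotS 0), hcardim]
  have cover : ∀ (i : Fin 4) (R : Finset (Fin 7)),
      IsRecoverySet G i R → ∃ v, v ∈ C ∧ v ∈ R := by
    intro i R hR
    by_contra hcon
    push_neg at hcon
    set g : Fin 3 → (Fin 4 → ZMod 2) :=
      fun k => if k = 0 then 0 else (fun b => G b (p k)) with hg
    have hsub : ((fun j => fun b => G b j) '' (R : Set (Fin 7))) ⊆ Set.range g := by
      rintro x ⟨j, hj, rfl⟩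
      have hjS : j ∉ Finset.image S Finset.univ := fun hmem =>
        hcon j (Finset.mem_insert_of_mem hmem) hj
      have hjP : j ∈ Pf := Finset.mem_sdiff.2 ⟨Finset.mem_univ _, hjS⟩
      obtain ⟨k, -, hk⟩ := Finset.mem_image.1 (pim ▸ hjP)
      have hk0 : k ≠ 0 := by
        intro h0
        subst h0
        rw [← hk] at hj
        exact hcon (p 0) (Finset.mem_insert_self _ _) hj
      exact ⟨k, by rw [hg]; simp only [if_neg hk0]; rw [hk]⟩
    have hmem : (Pi.single i 1 : Fin 4 → ZMod 2) ∈ Submodule.span (ZMod 2) (Set.range g) :=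
      Submodule.span_mono hsub hR
    rw [Submodule.mem_span_range_iff_exists_fun] at hmem
    obtain ⟨c, hc⟩ := hmem
    set c' : Fin 3 → ZMod 2 := fun k => if k = 0 then 0 else c k with hc'def
    have hc'0 : c' 0 = 0 := by rw [hc'def]; simp
    have hcb : ∀ b : Fin 4, ∑ k, c' k * G b (p k) = (Pi.single i 1 : Fin 4 → ZMod 2) b := by
      intro b
      have h1 := congrFun hc b
      rw [Finset.sum_apply] at h1
      rw [← h1]
      apply Finset.sum_congr rfl
      intro k _
      by_cases h0 : k = 0 <;> simp [hc'def, hg, h0, smul_eq_mul]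
    apply goodSet_no_unique c' hc'0
    refine ⟨fun k => G i (p k), imgeq ▸ Finset.mem_image_of_mem _ (Finset.mem_univ i), ?_⟩
    intro x hx
    obtain ⟨b, -, rfl⟩ := Finset.mem_image.1 ((imgeq.symm ▸ hx :
      x ∈ Finset.image (fun b => fun k => G b (p k)) Finset.univ))
    constructor
    · intro h1
      have h2 := hcb b
      rw [h1] at h2
      rw [Pi.single_apply] at h2
      by_cases hbi : b = i
      · rw [hbi]
      · rw [if_neg hbi] at h2; exact absurd h2 one_ne_zero
    · intro hxz
      have hbi : b = i := rinj b i hxz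
      subst hbi
      rw [hcb b, Pi.single_eq_same]
  constructor
  · -- upper bound
    rintro lam ⟨w, hw0, hwrec, hwsum, hwload⟩
    calc ∑ i, lam i = ∑ i, ∑ R : Finset (Fin 7), w i R := by
          exact Finset.sum_congr rfl (fun i _ => (hwsum i).symm)
      _ ≤ ∑ i, ∑ R : Finset (Fin 7), ∑ v ∈ C, (if v ∈ R then w i R else 0) := by
          apply Finset.sum_le_sum
          intro i _
          apply Finset.sum_le_sum
          intro R _
          have hle : ∀ u ∈ C, (0:ℝ) ≤ if u ∈ R then w i R else 0 := by
            intro u _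
            by_cases hu : u ∈ R
            · rw [if_pos hu]; exact hw0 i R
            · rw [if_neg hu]
          by_cases hwz : w i R = 0
          · rw [hwz]
            simp
          · obtain ⟨v, hvC, hvR⟩ := cover i R (hwrec i R hwz)
            have h3 := Finset.single_le_sum hle hvC
            rw [if_pos hvR] at h3
            exact h3
      _ = ∑ i, ∑ v ∈ C, ∑ R : Finset (Fin 7), (if v ∈ R then w i R else 0) :=
          Finset.sum_congr rfl (fun i _ => Finset.sum_comm)
      _ = ∑ v ∈ C, ∑ i, ∑ R : Finset (Fin 7), (if v ∈ R then w i R else 0) :=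
          Finset.sum_comm
      _ ≤ ∑ _v ∈ C, (1 : ℝ) := Finset.sum_le_sum (fun v _ => hwload v)
      _ = 5 := by rw [Finset.sum_const, hCcard]; norm_num
  · -- achievability
    refine ⟨a, hrec, ?_⟩
    refine ⟨fun i R => (if R = {S i} then (1 : ℝ) else 0)
      + (if i = a ∧ R = Pf then 1 else 0), ?_, ?_, ?_, ?_⟩
    · intro i R
      beta_reduce
      have h1 : (0:ℝ) ≤ (if R = {S i} then (1 : ℝ) else 0) := by split_ifs <;> norm_num
      have h2 : (0:ℝ) ≤ (if i = a ∧ R = Pf then (1:ℝ) else 0) := by split_ifs <;> norm_num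
      linarith
    · intro i R hne0
      beta_reduce at hne0
      by_cases h1 : R = {S i}
      · subst h1
        rw [IsRecoverySet]
        have : (Pi.single i 1 : Fin 4 → ZMod 2) = fun b => G b (S i) := (hS i).symm
        rw [this]
        exact Submodule.subset_span ⟨S i, by simp, rfl⟩
      · rw [if_neg h1, zero_add] at hne0
        have h2 : i = a ∧ R = Pf := by
          by_contra h3
          rw [if_neg h3] at hne0
          exact hne0 rfl
        obtain ⟨rfl, rfl⟩ := h2
        exact hrec
    · intro i
      beta_reduce
      rw [Finset.sum_add_distrib]
      have h1 : ∑ R : Finset (Fin 7), (if R = {S i} then (1:ℝ) else 0) = 1 := by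
        rw [Finset.sum_ite_eq' Finset.univ ({S i}) (fun _ => (1:ℝ))]
        simp
      have h2 : ∑ R : Finset (Fin 7), (if i = a ∧ R = Pf then (1:ℝ) else 0)
          = if i = a then 1 else 0 := by
        by_cases hia : i = a
        · simp only [hia, true_and, if_pos rfl]
          rw [Finset.sum_ite_eq' Finset.univ Pf (fun _ => (1:ℝ))]
          simp
        · simp [hia]
      rw [h1, h2]
      by_cases hia : i = a <;> simp [hia] <;> norm_num
    · intro v
      beta_reduce
      have hsplit : ∀ (i : Fin 4) (R : Finset (Fin 7)),
          (if v ∈ R then ((if R = {S i} then (1:ℝ) else 0)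
            + (if i = a ∧ R = Pf then 1 else 0)) else 0)
          = (if R = {S i} then (if v ∈ R then (1:ℝ) else 0) else 0)
            + (if i = a ∧ R = Pf then (if v ∈ R then (1:ℝ) else 0) else 0) := by
        intro i R
        split_ifs <;> norm_num
      calc ∑ i, ∑ R : Finset (Fin 7), (if v ∈ R then ((if R = {S i} then (1:ℝ) else 0)
            + (if i = a ∧ R = Pf then 1 else 0)) else 0)
          = ∑ i, ((∑ R : Finset (Fin 7), (if R = {S i} then (if v ∈ R then (1:ℝ) else 0) else 0))
            + ∑ R : Finset (Fin 7), (if i = a ∧ R = Pf then (if v ∈ R then (1:ℝ) else 0) else 0)) := by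
            apply Finset.sum_congr rfl
            intro i _
            rw [← Finset.sum_add_distrib]
            exact Finset.sum_congr rfl (fun R _ => hsplit i R)
        _ = ∑ i, ((if v = S i then (1:ℝ) else 0) + (if i = a ∧ v ∈ Pf then (1:ℝ) else 0)) := by
            apply Finset.sum_congr rfl
            intro i _
            congr 1
            · rw [Finset.sum_ite_eq' Finset.univ ({S i} : Finset (Fin 7))
                (fun R => if v ∈ R then (1:ℝ) else 0)]
              simp [Finset.mem_singleton]
            · by_cases hia : i = a
              · simp only [hia, true_and]
                rw [Finset.sum_ite_eq' Finset.univ Pf (fun R => if v ∈ R then (1:ℝ) else 0)]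
                simp
              · simp [hia]
        _ = (∑ i, (if v = S i then (1:ℝ) else 0)) + ∑ i, (if i = a ∧ v ∈ Pf then (1:ℝ) else 0) := by
            rw [Finset.sum_add_distrib]
        _ ≤ 1 := by
            have h2 : ∑ i, (if i = a ∧ v ∈ Pf then (1:ℝ) else 0)
                = if v ∈ Pf then 1 else 0 := by
              by_cases hv : v ∈ Pf
              · simp only [hv, and_true, if_pos hv]
                rw [Finset.sum_ite_eq' Finset.univ a (fun _ => (1:ℝ))]
                simp
              · simp [hv]
            rw [h2]
            by_cases hv : v ∈ Finset.image S Finset.univ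
            · obtain ⟨i0, -, rfl⟩ := Finset.mem_image.1 hv
              have h1 : ∑ i, (if S i0 = S i then (1:ℝ) else 0) = 1 := by
                have : ∀ i : Fin 4, (if S i0 = S i then (1:ℝ) else 0)
                    = if i = i0 then (1:ℝ) else 0 := by
                  intro i
                  congr 1
                  simp [hSinj.eq_iff, eq_comm]
                rw [Finset.sum_congr rfl (fun i _ => this i),
                  Finset.sum_ite_eq' Finset.univ i0 (fun _ => (1:ℝ))]
                simp
              rw [h1]
              have : S i0 ∉ Pf := fun h =>
                (Finset.mem_sdiff.1 h).2 (Finset.mem_image_of_mem S (Finset.mem_univ i0))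
              rw [if_neg this]
              norm_num
            · have h1 : ∑ i, (if v = S i then (1:ℝ) else 0) = 0 := by
                apply Finset.sum_eq_zero
                intro i _
                rw [if_neg]
                intro e
                exact hv (e ▸ Finset.mem_image_of_mem S (Finset.mem_univ i))
              rw [h1]
              split_ifs <;> norm_num
end

section
/- For the systematic q-ary Hamming code Ham(r,q) with r ≥ 3 and unit server capacities, the demand vector (1 + q/(q−1))·e_i is achievable for every data symbol i; that is, the maximal achievable demand for a single data object is at least 1 + q/(q−1). -/
lemma fiber_count {V W : Type*} [AddCommGroup V] [AddCommGroup W] [Fintype V] [Fintype W]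
    [DecidableEq W] (f : V → W) (hadd : ∀ a b, f (a + b) = f a + f b)
    (hf : Function.Surjective f) (c : W) :
    (Finset.univ.filter (fun y => f y = c)).card * Fintype.card W = Fintype.card V := by
  have hsub : ∀ a b, f (a - b) = f a - f b := by
    intro a b
    have := hadd (a - b) b
    simp only [sub_add_cancel] at this
    exact eq_sub_of_add_eq this.symm
  have key : ∀ t : W, (Finset.univ.filter (fun y => f y = t)).card
      = (Finset.univ.filter (fun y => f y = c)).card := by
    intro t
    obtain ⟨yc, hyc⟩ := hf c
    obtain ⟨yt, hyt⟩ := hf t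
    apply Finset.card_bij (fun y _ => y + (yc - yt))
    · intro y hy
      simp only [Finset.mem_filter, Finset.mem_univ, true_and] at hy ⊢
      rw [hadd, hsub, hy, hyc, hyt]; abel
    · intro a _ b _ hab
      exact add_right_cancel hab
    · intro b hb
      refine ⟨b - (yc - yt), ?_, by abel⟩
      simp only [Finset.mem_filter, Finset.mem_univ, true_and] at hb ⊢
      rw [hsub, hsub, hb, hyc, hyt]; abel
  have hV : Fintype.card V = ∑ t : W, (Finset.univ.filter (fun y => f y = t)).card := by
    rw [← Finset.card_univ, Finset.card_eq_sum_card_fiberwise (fun y _ => Finset.mem_univ (f y))]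
  rw [hV, Finset.sum_congr rfl (fun t _ => key t), Finset.sum_const, Finset.card_univ,
    smul_eq_mul, mul_comm]

def dpv {F : Type*} [CommRing F] {r : ℕ} (y x : Fin r → F) : F := ∑ b, y b * x b

lemma dpv_add {F : Type*} [CommRing F] {r : ℕ} (y z x : Fin r → F) :
    dpv (y + z) x = dpv y x + dpv z x := by
  simp [dpv, add_mul, Finset.sum_add_distrib]

lemma dpv_sub {F : Type*} [CommRing F] {r : ℕ} (y z x : Fin r → F) :
    dpv (y - z) x = dpv y x - dpv z x := by
  simp [dpv, sub_mul, Finset.sum_sub_distrib]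

lemma dpv_smul {F : Type*} [CommRing F] {r : ℕ} (s : F) (y x : Fin r → F) :
    dpv (s • y) x = s * dpv y x := by
  simp [dpv, Finset.mul_sum, mul_assoc]

lemma dpv_single {F : Type*} [CommRing F] {r : ℕ} [DecidableEq (Fin r)] (b : Fin r) (t : F)
    (x : Fin r → F) : dpv (Pi.single b t) x = t * x b := by
  simp [dpv, Pi.single_apply, Finset.sum_ite_eq']

lemma surj_one {F : Type*} [Field F] {r : ℕ} (x : Fin r → F) (hx : x ≠ 0) :
    Function.Surjective (fun y : Fin r → F => dpv y x) := by
  obtain ⟨b, hb⟩ := Function.ne_iff.mp hx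
  intro t
  refine ⟨Pi.single b (t * (x b)⁻¹), ?_⟩
  simp only [dpv_single]
  have hb' : x b ≠ 0 := by simpa using hb
  field_simp

lemma surj_two {F : Type*} [Field F] {r : ℕ} (h v : Fin r → F)
    (hind : ∀ a b : F, a • h + b • v = 0 → a = 0 ∧ b = 0) :
    Function.Surjective (fun y : Fin r → F => (dpv y h, dpv y v)) := by
  have hh : h ≠ 0 := by
    intro h0
    have := (hind 1 0 (by simp [h0])).1
    simp at this
  obtain ⟨y1, hy1⟩ := surj_one h hh 1
  simp only at hy1
  have hz : ∃ z : Fin r → F, dpv z h = 0 ∧ dpv z v ≠ 0 := by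
    by_contra hcon
    push_neg at hcon
    have hvb : ∀ b : Fin r, v b = dpv y1 v * h b := by
      intro b
      have h1 : dpv (Pi.single b 1 - h b • y1) h = 0 := by
        rw [dpv_sub, dpv_smul, dpv_single, hy1]; ring
      have h2 := hcon _ h1
      rw [dpv_sub, dpv_smul, dpv_single] at h2
      linear_combination h2
    have : dpv y1 v • h + (-1 : F) • v = 0 := by
      funext b
      simp [hvb b, mul_comm]
    have := (hind _ _ this).2
    norm_num at this
  obtain ⟨z, hz0, hzv⟩ := hz
  set y0 : Fin r → F := (dpv z v)⁻¹ • z with hy0def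
  have hy0h : dpv y0 h = 0 := by rw [hy0def, dpv_smul, hz0, mul_zero]
  have hy0v : dpv y0 v = 1 := by rw [hy0def, dpv_smul]; field_simp
  rintro ⟨s, t⟩
  refine ⟨s • y1 + (t - s * dpv y1 v) • y0, ?_⟩
  simp only [dpv_add, dpv_smul, hy1, hy0h, hy0v, Prod.mk.injEq]
  constructor <;> ring




/-- For the systematic `q`-ary Hamming code `Ham(r,q)` with `r ≥ 3` and unit
server capacities, the demand vector `(1 + q/(q-1)) · e_i` is achievable for every data
symbol `i`. -/
theorem stmt12 {r n k : ℕ} {F : Type*} [Field F] [Fintype F] [DecidableEq F]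
    (hr : 3 ≤ r)
    (hn : n = (Fintype.card F ^ r - 1) / (Fintype.card F - 1))
    (hk : k = (Fintype.card F ^ r - 1) / (Fintype.card F - 1) - r)
    (H : Matrix (Fin r) (Fin n) F)
    (hnz : ∀ j : Fin n, (fun a => H a j) ≠ (0 : Fin r → F))
    (hrep : ∀ v : Fin r → F, v ≠ 0 → ∃ (j : Fin n) (a : F), v = a • fun b => H b j)
    (hinj : ∀ (j j' : Fin n) (a : F), (fun b => H b j) = a • (fun b => H b j') → j = j')
    (G : Matrix (Fin k) (Fin n) F)
    (hspan : Submodule.span F (Set.range G) = LinearMap.ker H.mulVecLin)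
    (hsys : ∀ a : Fin k, ∃ j : Fin n, (fun b => G b j) = Pi.single a 1)
    (i : Fin k) :
    Achievable G (fun m => if m = i then
      1 + (Fintype.card F : ℝ) / ((Fintype.card F : ℝ) - 1) else 0) := by
  classical
  have hq : 2 ≤ Fintype.card F := Fintype.one_lt_card
  set q := Fintype.card F with hqdef
  obtain ⟨ji, hji⟩ := hsys i
  set h : Fin r → F := fun b => H b ji with hhdef
  have hh0 : h ≠ 0 := hnz ji
  have hcol : ∀ a : Fin k, ∀ b : Fin r, ∑ j, H b j * G a j = 0 := by
    intro a b
    have hmem : G a ∈ LinearMap.ker H.mulVecLin := by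
      rw [← hspan]; exact Submodule.subset_span ⟨a, rfl⟩
    have h1 := LinearMap.mem_ker.mp hmem
    have h2 := congrFun h1 b
    simpa [Matrix.mulVecLin_apply, Matrix.mulVec, dotProduct] using h2
  set Ry : (Fin r → F) → Finset (Fin n) :=
    fun y => Finset.univ.filter (fun j => j ≠ ji ∧ dpv y (fun b => H b j) ≠ 0) with hRydef
  set S : Finset (Fin r → F) := Finset.univ.filter (fun y => dpv y h = 1) with hSdef
  -- recovery sets
  have hrec : ∀ y : Fin r → F, dpv y h = 1 → IsRecoverySet G i (Ry y) := by
    intro y hy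
    have key : ∀ a : Fin k, (Pi.single i 1 : Fin k → F) a
        = ∑ j ∈ Ry y, (-(dpv y (fun b => H b j))) * G a j := by
      intro a
      have swap : ∑ j : Fin n, dpv y (fun b => H b j) * G a j = 0 := by
        calc ∑ j : Fin n, dpv y (fun b => H b j) * G a j
            = ∑ j : Fin n, ∑ b : Fin r, y b * (H b j * G a j) := by
              simp [dpv, Finset.sum_mul, mul_assoc]
          _ = ∑ b : Fin r, ∑ j : Fin n, y b * (H b j * G a j) := Finset.sum_comm
          _ = ∑ b : Fin r, y b * ∑ j : Fin n, H b j * G a j := by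
              simp [Finset.mul_sum]
          _ = 0 := by simp [hcol a]
      have hsplit : dpv y (fun b => H b ji) * G a ji
          + ∑ j ∈ Finset.univ.erase ji, dpv y (fun b => H b j) * G a j = 0 := by
        rw [Finset.add_sum_erase _ (fun j => dpv y (fun b => H b j) * G a j)
          (Finset.mem_univ ji)]
        exact swap
      have herase : ∑ j ∈ Finset.univ.erase ji, dpv y (fun b => H b j) * G a j
          = ∑ j ∈ Ry y, dpv y (fun b => H b j) * G a j := by
        symm
        apply Finset.sum_subset
        · intro j hj
          simp only [hRydef, Finset.mem_filter, Finset.mem_univ, true_and] at hj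
          simp [hj.1]
        · intro j hj hnot
          simp only [hRydef, Finset.mem_filter, Finset.mem_univ, true_and] at hnot
          simp only [Finset.mem_erase, Finset.mem_univ, and_true] at hj
          push_neg at hnot
          rw [hnot hj, zero_mul]
      have hGji : G a ji = (Pi.single i 1 : Fin k → F) a := congrFun hji a
      rw [show dpv y (fun b => H b ji) = 1 from hy, one_mul, herase] at hsplit
      have hsum : ∑ j ∈ Ry y, dpv y (fun b => H b j) * G a j = -G a ji := by
        linear_combination hsplit
      rw [← hGji]
      simp only [neg_mul, Finset.sum_neg_distrib, hsum, neg_neg]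
    have hrep2 : (Pi.single i 1 : Fin k → F)
        = ∑ j ∈ Ry y, (-(dpv y (fun b => H b j))) • (fun a => G a j) := by
      funext a
      rw [key a]
      simp [Finset.sum_apply]
    rw [IsRecoverySet, hrep2]
    apply Submodule.sum_mem
    intro j hj
    exact Submodule.smul_mem _ _ (Submodule.subset_span ⟨j, Finset.mem_coe.mpr hj, rfl⟩)
  have hrecs : IsRecoverySet G i {ji} := by
    rw [IsRecoverySet]
    exact Submodule.subset_span ⟨ji, by simp, hji⟩
  -- counting
  have cardFun : Fintype.card (Fin r → F) = q ^ r := by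
    simp [hqdef]
  have cardS : S.card = q ^ (r - 1) := by
    have h1 := fiber_count (fun y : Fin r → F => dpv y h)
      (fun a b => dpv_add a b h) (surj_one h hh0) 1
    rw [cardFun] at h1
    have hpow : q ^ r = q ^ (r - 1) * q := by
      rw [← pow_succ]; congr 1; omega
    rw [hpow] at h1
    exact Nat.eq_of_mul_eq_mul_right (by omega) h1
  have hindep : ∀ v : Fin n, v ≠ ji → ∀ a b : F,
      a • h + b • (fun c => H c v) = 0 → a = 0 ∧ b = 0 := by
    intro v hv a b hab
    by_cases hb : b = 0
    · subst hb
      simp only [zero_smul, add_zero] at hab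
      rcases smul_eq_zero.mp hab with ha | h0
      · exact ⟨ha, rfl⟩
      · exact absurd h0 hh0
    · exfalso
      refine hv (hinj v ji (-a * b⁻¹) ?_)
      funext c
      have hc := congrFun hab c
      simp only [Pi.add_apply, Pi.smul_apply, smul_eq_mul, Pi.zero_apply] at hc ⊢
      have h3 : b * H c v = -(a * h c) := by linear_combination hc
      have h4 : H c v = b⁻¹ * (b * H c v) := by field_simp
      rw [h4, h3]; ring
  have cardNot : ∀ v : Fin n, v ≠ ji →
      (Finset.univ.filter (fun y : Fin r → F =>
        dpv y h = 1 ∧ dpv y (fun c => H c v) = 0)).card = q ^ (r - 2) := by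
    intro v hv
    have h1 := fiber_count (fun y : Fin r → F => (dpv y h, dpv y (fun c => H c v)))
      (fun a b => by simp [dpv_add]) (surj_two h _ (hindep v hv)) (1, 0)
    rw [cardFun, Fintype.card_prod] at h1
    have heq : (Finset.univ.filter (fun y : Fin r → F =>
        (dpv y h, dpv y (fun c => H c v)) = ((1 : F), (0 : F)))).card
        = (Finset.univ.filter (fun y : Fin r → F =>
        dpv y h = 1 ∧ dpv y (fun c => H c v) = 0)).card := by
      congr 1
      apply Finset.filter_congr
      intro y _
      simp [Prod.ext_iff]
    rw [heq] at h1
    have hpow : q ^ r = q ^ (r - 2) * (q * q) := by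
      rw [← mul_assoc, ← pow_succ, ← pow_succ]; congr 1; omega
    rw [hpow] at h1
    have hqq : 0 < q * q := by positivity
    exact Nat.eq_of_mul_eq_mul_right hqq h1
  have cardLoad : ∀ v : Fin n, v ≠ ji →
      (S.filter (fun y => v ∈ Ry y)).card = q ^ (r - 1) - q ^ (r - 2) := by
    intro v hv
    have hmem : ∀ y : Fin r → F, (v ∈ Ry y) ↔ dpv y (fun c => H c v) ≠ 0 := by
      intro y
      simp [hRydef, hv]
    have hsplitcard := Finset.card_filter_add_card_filter_not
      (s := S) (p := fun y => dpv y (fun c => H c v) = 0)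
    have heq0 : S.filter (fun y => dpv y (fun c => H c v) = 0)
        = Finset.univ.filter (fun y : Fin r → F =>
          dpv y h = 1 ∧ dpv y (fun c => H c v) = 0) := by
      rw [hSdef, Finset.filter_filter]
    have heq1 : S.filter (fun y => v ∈ Ry y)
        = S.filter (fun y => ¬(dpv y (fun c => H c v) = 0)) := by
      apply Finset.filter_congr
      intro y _
      simp [hmem y]
    rw [heq1]
    rw [heq0] at hsplitcard
    rw [cardNot v hv, cardS] at hsplitcard
    omega
  -- the weight function
  set cst : ℝ := (((q : ℝ) - 1) * (q : ℝ) ^ (r - 2))⁻¹ with hcstdef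
  have hq1 : (2 : ℝ) ≤ (q : ℝ) := by exact_mod_cast hq
  have hqm1 : (0 : ℝ) < (q : ℝ) - 1 := by linarith
  have hppos : (0 : ℝ) < (q : ℝ) ^ (r - 2) := by positivity
  have hcstpos : 0 < cst := by rw [hcstdef]; positivity
  have natT2 : ∀ v : Fin n, ∑ R : Finset (Fin n),
      (if v ∈ R then (S.filter (fun y => Ry y = R)).card else 0)
      = (S.filter (fun y => v ∈ Ry y)).card := by
    intro v
    have step : ∀ R : Finset (Fin n),
        (if v ∈ R then (S.filter (fun y => Ry y = R)).card else 0)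
        = ((S.filter (fun y => v ∈ Ry y)).filter (fun y => Ry y = R)).card := by
      intro R
      by_cases hvR : v ∈ R
      · rw [if_pos hvR]
        congr 1
        ext y
        simp only [Finset.mem_filter, Finset.mem_univ, true_and]
        constructor
        · rintro ⟨h1, h2⟩
          exact ⟨⟨h1, h2 ▸ hvR⟩, h2⟩
        · rintro ⟨⟨h1, _⟩, h2⟩
          exact ⟨h1, h2⟩
      · rw [if_neg hvR]
        symm
        rw [Finset.card_eq_zero]
        apply Finset.filter_false_of_mem
        intro y hy hRy
        have hvy : v ∈ Ry y := (Finset.mem_filter.mp hy).2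
        exact hvR (hRy ▸ hvy)
    rw [Finset.sum_congr rfl (fun R _ => step R)]
    exact (Finset.card_eq_sum_card_fiberwise (fun y _ => Finset.mem_univ (Ry y))).symm
  refine ⟨fun m R => if m = i then
      (if R = {ji} then (1:ℝ) else 0) + cst * ((S.filter (fun y => Ry y = R)).card : ℝ)
    else 0, ?_, ?_, ?_, ?_⟩
  · -- nonnegativity
    intro m R
    dsimp only
    split
    · have h1 : (0:ℝ) ≤ (if R = {ji} then (1:ℝ) else 0) := by split <;> norm_num
      have h2 : (0:ℝ) ≤ cst * ((S.filter (fun y => Ry y = R)).card : ℝ) :=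
        mul_nonneg hcstpos.le (Nat.cast_nonneg _)
      linarith
    · exact le_refl 0
  · -- recovery
    intro m R hw
    dsimp only at hw
    by_cases hm : m = i
    · subst hm
      rw [if_pos rfl] at hw
      by_cases hR : R = {ji}
      · subst hR; exact hrecs
      · rw [if_neg hR] at hw
        have hcard : (S.filter (fun y => Ry y = R)).card ≠ 0 := by
          intro h0; apply hw; rw [h0]; simp
        obtain ⟨y, hy⟩ := Finset.card_ne_zero.mp hcard
        simp only [hSdef, Finset.filter_filter, Finset.mem_filter, Finset.mem_univ,
          true_and] at hy
        exact hy.2 ▸ hrec y hy.1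
    · rw [if_neg hm] at hw
      exact absurd rfl hw
  · -- total demand
    intro m
    dsimp only
    by_cases hm : m = i
    · subst hm
      simp only [eq_self_iff_true, if_true]
      rw [Finset.sum_add_distrib]
      have e1 : ∑ R : Finset (Fin n), (if R = {ji} then (1:ℝ) else 0) = 1 := by
        rw [Finset.sum_ite_eq' Finset.univ ({ji} : Finset (Fin n)) (fun _ => (1:ℝ))]
        simp
      have e2 : ∑ R : Finset (Fin n), cst * ((S.filter (fun y => Ry y = R)).card : ℝ)
          = cst * ((q:ℝ))^(r-1) := by
        rw [← Finset.mul_sum]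
        congr 1
        have hfib := Finset.card_eq_sum_card_fiberwise
          (s := S) (t := (Finset.univ : Finset (Finset (Fin n)))) (f := Ry)
          (fun y _ => Finset.mem_univ (Ry y))
        rw [← Nat.cast_sum, ← hfib, cardS]
        push_cast
        ring
      have e3 : cst * ((q:ℝ))^(r-1) = (q:ℝ)/((q:ℝ)-1) := by
        have hp : ((q:ℝ))^(r-1) = ((q:ℝ))^(r-2) * q := by
          rw [← pow_succ]; congr 1; omega
        rw [hcstdef, hp]
        field_simp
      rw [e1, e2, e3]
    · simp [hm]
  · -- capacity
    intro v
    dsimp only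
    rw [Finset.sum_eq_single i (fun m _ hm => by simp [hm]) (fun hi => absurd (Finset.mem_univ i) hi)]
    simp only [eq_self_iff_true, if_true]
    have hsplit : ∀ R : Finset (Fin n),
        (if v ∈ R then ((if R = {ji} then (1:ℝ) else 0)
          + cst * ((S.filter (fun y => Ry y = R)).card : ℝ)) else 0)
        = (if v ∈ R then (if R = {ji} then (1:ℝ) else 0) else 0)
          + (if v ∈ R then cst * ((S.filter (fun y => Ry y = R)).card : ℝ) else 0) := by
      intro R; split <;> simp
    rw [Finset.sum_congr rfl (fun R _ => hsplit R), Finset.sum_add_distrib]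
    have e1 : ∑ R : Finset (Fin n), (if v ∈ R then (if R = {ji} then (1:ℝ) else 0) else 0)
        = if v = ji then (1:ℝ) else 0 := by
      have comm : ∀ R : Finset (Fin n),
          (if v ∈ R then (if R = {ji} then (1:ℝ) else 0) else 0)
          = (if R = {ji} then (if v ∈ R then (1:ℝ) else 0) else 0) := by
        intro R
        by_cases h1 : v ∈ R <;> by_cases h2 : R = {ji} <;> simp [h1, h2]
      rw [Finset.sum_congr rfl (fun R _ => comm R),
        Finset.sum_ite_eq' Finset.univ ({ji} : Finset (Fin n))
          (fun R => if v ∈ R then (1:ℝ) else 0)]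
      simp [Finset.mem_singleton]
    have e2 : ∑ R : Finset (Fin n),
        (if v ∈ R then cst * ((S.filter (fun y => Ry y = R)).card : ℝ) else 0)
        = cst * ((S.filter (fun y => v ∈ Ry y)).card : ℝ) := by
      have pull : ∀ R : Finset (Fin n),
          (if v ∈ R then cst * ((S.filter (fun y => Ry y = R)).card : ℝ) else 0)
          = cst * (if v ∈ R then ((S.filter (fun y => Ry y = R)).card : ℝ) else 0) := by
        intro R; split <;> ring
      rw [Finset.sum_congr rfl (fun R _ => pull R), ← Finset.mul_sum]
      congr 1
      rw [← natT2 v, Nat.cast_sum]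
      apply Finset.sum_congr rfl
      intro R _
      split <;> simp
    rw [e1, e2]
    by_cases hv : v = ji
    · have hempty : S.filter (fun y => v ∈ Ry y) = ∅ := by
        apply Finset.filter_false_of_mem
        intro y _
        subst hv
        simp [hRydef]
      rw [if_pos hv, hempty]
      simp
    · rw [if_neg hv, cardLoad v hv]
      have hle : q^(r-2) ≤ q^(r-1) := Nat.pow_le_pow_right (by omega) (by omega)
      rw [Nat.cast_sub hle]
      have hp : ((q:ℝ))^(r-1) = ((q:ℝ))^(r-2) * q := by
        rw [← pow_succ]; congr 1; omega
      push_cast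
      rw [hp, hcstdef]
      rw [show ((q:ℝ))^(r-2) * q - ((q:ℝ))^(r-2) = ((q:ℝ)-1) * ((q:ℝ))^(r-2) by ring]
      rw [inv_mul_cancel₀ (by positivity)]
      norm_num
end

section
/- For an [n,k,d] linear code with generator matrix G and unit server capacities, if the demand vector δ·e_i is achievable for all i ∈ [k], then ⌈δ⌉ ≤ d. In particular the maximal achievable single-object demand in Ham(r,q), which has minimum distance 3, satisfies ⌈λ_i*⌉ ≤ 3. -/
/-- For an `[n,k,d]` linear code with generator matrix `G` (linearly
independent rows) and unit server capacities, if the demand vector `δ · e_i` is achievable for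
all `i ∈ [k]`, then `⌈δ⌉ ≤ d`, where `d` is the minimum distance (least Hamming weight of a
nonzero codeword) of the code generated by the rows of `G`. -/
theorem stmt13 {n k : ℕ} {F : Type*} [Field F] [Fintype F] [DecidableEq F]
    (hk : 0 < k)
    (G : Matrix (Fin k) (Fin n) F)
    (hind : LinearIndependent F (fun a : Fin k => (fun j => G a j)))
    (d : ℕ)
    (hd : IsLeast {w : ℕ | ∃ c ∈ Submodule.span F (Set.range G), c ≠ 0 ∧ hammingNorm c = w} d)
    (δ : ℝ)
    (hach : ∀ i : Fin k, Achievable G (fun m => if m = i then δ else 0)) :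
    ⌈δ⌉ ≤ (d : ℤ) := by
  obtain ⟨⟨c, hc_mem, hc_ne, hc_norm⟩, -⟩ := hd
  -- write c as a combination of rows
  obtain ⟨x, hx⟩ := (Submodule.mem_span_range_iff_exists_fun F).1 hc_mem
  have hx_ne : x ≠ 0 := by
    rintro rfl
    apply hc_ne
    simp at hx
    exact hx.symm
  obtain ⟨i, hxi⟩ := Function.ne_iff.1 hx_ne
  simp only [Pi.zero_apply] at hxi
  -- the support of c
  set S : Finset (Fin n) := Finset.univ.filter (fun j => c j ≠ 0) with hS
  have hScard : S.card = d := hc_norm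
  -- linear functional
  let φ : (Fin k → F) →ₗ[F] F := ∑ a : Fin k, x a • LinearMap.proj a
  have hφ : ∀ u : Fin k → F, φ u = ∑ a : Fin k, x a * u a := by
    intro u
    simp [φ, LinearMap.sum_apply, LinearMap.smul_apply, smul_eq_mul]
  have hφcol : ∀ j : Fin n, φ (fun a => G a j) = c j := by
    intro j
    rw [hφ, ← hx]
    simp [Finset.sum_apply]
  -- every recovery set for i meets S
  obtain ⟨w, hw0, hwrec, hwsum, hload⟩ := hach i
  have hmeet : ∀ R : Finset (Fin n), w i R ≠ 0 → ∃ v ∈ R, v ∈ S := by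
    intro R hR
    by_contra hcon
    push_neg at hcon
    have hrec := hwrec i R hR
    have hker : Submodule.span F ((fun j => fun a => G a j) '' (R : Set (Fin n)))
        ≤ LinearMap.ker φ := by
      rw [Submodule.span_le]
      rintro u ⟨j, hj, rfl⟩
      have : c j = 0 := by
        have := hcon j hj
        simpa [hS] using this
      simp [LinearMap.mem_ker, hφcol j, this]
    have := hker hrec
    rw [LinearMap.mem_ker, hφ] at this
    apply hxi
    rw [← this]
    rw [Finset.sum_eq_single i]
    · simp
    · intro b _ hb; simp [Pi.single_apply, hb]
    · simp
  -- main counting inequality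
  have hδ : δ ≤ (d : ℝ) := by
    have h1 : δ = ∑ R : Finset (Fin n), w i R := by
      have := hwsum i; simp at this; exact this.symm
    have h2 : ∀ R : Finset (Fin n), w i R ≤ ∑ v ∈ S, (if v ∈ R then w i R else 0) := by
      intro R
      rcases eq_or_ne (w i R) 0 with h | h
      · rw [h]
        exact Finset.sum_nonneg fun v _ => by split_ifs <;> simp [hw0]
      · obtain ⟨v, hvR, hvS⟩ := hmeet R h
        calc w i R = (if v ∈ R then w i R else 0) := by rw [if_pos hvR]
          _ ≤ _ := Finset.single_le_sum (f := fun v => if v ∈ R then w i R else 0)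
              (fun v _ => by by_cases hv : v ∈ R <;> simp [hv, hw0]) hvS
    calc δ = ∑ R : Finset (Fin n), w i R := h1
      _ ≤ ∑ R : Finset (Fin n), ∑ v ∈ S, (if v ∈ R then w i R else 0) :=
          Finset.sum_le_sum fun R _ => h2 R
      _ = ∑ v ∈ S, ∑ R : Finset (Fin n), (if v ∈ R then w i R else 0) :=
          Finset.sum_comm
      _ ≤ ∑ v ∈ S, (1 : ℝ) := by
          apply Finset.sum_le_sum
          intro v _
          calc ∑ R : Finset (Fin n), (if v ∈ R then w i R else 0)
              ≤ ∑ i' : Fin k, ∑ R : Finset (Fin n), (if v ∈ R then w i' R else 0) :=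
                Finset.single_le_sum
                  (f := fun i' => ∑ R : Finset (Fin n), (if v ∈ R then w i' R else 0))
                  (fun i' _ => Finset.sum_nonneg fun R _ => by split_ifs <;> simp [hw0])
                  (Finset.mem_univ i)
            _ ≤ 1 := hload v
      _ = (d : ℝ) := by rw [Finset.sum_const, hScard]; simp
  exact Int.ceil_le.2 (by exact_mod_cast hδ)
end

section
/- Let G be any generator matrix of Ham(r,2) (not necessarily systematic) that contains systematic columns e_i and e_j for two data symbols i ≠ j, and let s be the node with v_i + v_j = v_s in the parity-check matrix. Then every achievable demand vector satisfies λ_i + λ_j ≤ 3. -/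
open Finset Matrix

theorem Matrix.transpose_ne_zero_of_card_eq {m ι F : Type*} [Fintype m] [DecidableEq m]
    [Fintype ι] [Zero F] [Fintype F] [DecidableEq F] (H : Matrix m ι F)
    (hcard : Fintype.card ι = Fintype.card (m → F) - 1) (hcols : ∀ v, v ≠ 0 → ∃ j, Hᵀ j = v)
    (j : ι) : Hᵀ j ≠ 0 := by
  have hsub : univ.erase 0 ⊆ univ.image Hᵀ := fun v hv => by
    obtain ⟨j, hj⟩ := hcols v (ne_of_mem_erase hv)
    exact mem_image.2 ⟨j, mem_univ j, hj⟩
  have hcols_eq : univ.erase 0 = univ.image Hᵀ := eq_of_subset_of_card_le hsub <| by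
    rw [card_erase_of_mem (mem_univ 0), card_univ, ← hcard]
    exact card_image_le
  exact ne_of_mem_erase (hcols_eq ▸ mem_image_of_mem Hᵀ (mem_univ j))

section RecoverySets

variable {k n : ℕ} {F : Type*} [Field F] {G : Matrix (Fin k) (Fin n) F}

theorem IsRecoverySet.exists_mem_ne_zero {i : Fin k} {R : Finset (Fin n)}
    (hR : IsRecoverySet G i R) {t : Fin n} (ht : (fun b => G b t) = Pi.single i 1)
    {z : Fin n → F} (hz : z ∈ Submodule.span F (Set.range G)) (hzt : z t ≠ 0) :
    ∃ u ∈ R, z u ≠ 0 := by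
  obtain ⟨a, rfl⟩ : z ∈ LinearMap.range G.vecMulLinear := by
    rw [range_vecMulLinear]
    exact hz
  by_contra! h0
  have hker : Submodule.span F ((fun j => fun b => G b j) '' (R : Set (Fin n)))
      ≤ LinearMap.ker (dotProductEquiv F (Fin k) a) :=
    Submodule.span_le.2 <| by
      rintro _ ⟨u, hu, rfl⟩
      exact h0 u hu
  apply hzt
  have := hker hR
  rw [LinearMap.mem_ker, ← ht] at this
  exact this

theorem IsRecoverySet.exists_mem_of_add_col_eq [CharP F 2] {m : Type*}
    {H : Matrix m (Fin n) F}
    (hspan : Submodule.span F (Set.range G) = LinearMap.ker H.mulVecLin)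
    {i : Fin k} {R : Finset (Fin n)} (hR : IsRecoverySet G i R) {t t' s : Fin n}
    (ht : (fun b => G b t) = Pi.single i 1)
    (hs : (fun a => H a t) + (fun a => H a t') = fun a => H a s)
    (ht't : t' ≠ t) (hst : s ≠ t) :
    ∃ u ∈ ({t, t', s} : Finset (Fin n)), u ∈ R := by
  set z : Fin n → F := Pi.single t 1 + Pi.single t' 1 + Pi.single s 1 with hz
  have hz_mem : z ∈ Submodule.span F (Set.range G) := by
    rw [hspan, LinearMap.mem_ker, Matrix.mulVecLin_apply, hz, Matrix.mulVec_add, Matrix.mulVec_add,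
      Matrix.mulVec_single_one, Matrix.mulVec_single_one, Matrix.mulVec_single_one]
    ext a
    simpa [← congrFun hs a] using CharTwo.add_self_eq_zero (H a s)
  obtain ⟨u, huR, hzu⟩ := hR.exists_mem_ne_zero ht hz_mem (by simp [hz, ht't, hst])
  refine ⟨u, ?_, huR⟩
  by_contra hu
  simp only [mem_insert, mem_singleton, not_or] at hu
  exact hzu (by simp [hz, hu.1, hu.2.1, hu.2.2])

theorem Achievable.sum_le_card {lam : Fin k → ℝ} (h : Achievable G lam) (I : Finset (Fin k))
    (T : Finset (Fin n)) (hT : ∀ i ∈ I, ∀ R, IsRecoverySet G i R → ∃ v ∈ T, v ∈ R) :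
    ∑ i ∈ I, lam i ≤ #T := by
  obtain ⟨w, hw0, hwrec, hwsum, hwcap⟩ := h
  set load : Fin k → Fin n → ℝ := fun i v => ∑ R, if v ∈ R then w i R else 0 with hload
  have hload_nonneg : ∀ i v, 0 ≤ load i v := fun i v =>
    sum_nonneg fun R _ => by split_ifs <;> simp [hw0 i R]
  have hlam : ∀ i ∈ I, lam i ≤ ∑ v ∈ T, load i v := by
    intro i hi
    rw [← hwsum i, hload, sum_comm]
    refine sum_le_sum fun R _ => ?_
    rw [sum_ite_mem, sum_const, nsmul_eq_mul]
    rcases eq_or_ne (w i R) 0 with h0 | h0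
    · simp [h0]
    obtain ⟨v, hvT, hvR⟩ := hT i hi R (hwrec i R h0)
    have : (1 : ℝ) ≤ #(T ∩ R) := by exact_mod_cast card_pos.2 ⟨v, mem_inter.2 ⟨hvT, hvR⟩⟩
    exact le_mul_of_one_le_left (hw0 i R) this
  have hcap : ∀ v, ∑ i ∈ I, load i v ≤ 1 := fun v =>
    (sum_le_sum_of_subset_of_nonneg (subset_univ I) fun i _ _ => hload_nonneg i v).trans (hwcap v)
  calc ∑ i ∈ I, lam i ≤ ∑ i ∈ I, ∑ v ∈ T, load i v := sum_le_sum hlam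
    _ = ∑ v ∈ T, ∑ i ∈ I, load i v := sum_comm
    _ ≤ ∑ v ∈ T, 1 := sum_le_sum fun v _ => hcap v
    _ = #T := by simp

end RecoverySets

theorem stmt14_general {r n k : ℕ} (hn : n = 2 ^ r - 1)
    (H : Matrix (Fin r) (Fin n) (ZMod 2))
    (hcols : ∀ v : Fin r → ZMod 2, v ≠ 0 → ∃! j : Fin n, (fun a => H a j) = v)
    (G : Matrix (Fin k) (Fin n) (ZMod 2))
    (hspan : Submodule.span (ZMod 2) (Set.range G) = LinearMap.ker H.mulVecLin)
    (i j : Fin k) (hij : i ≠ j) (si sj s : Fin n)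
    (hsi : (fun b => G b si) = Pi.single i 1)
    (hsj : (fun b => G b sj) = Pi.single j 1)
    (hs : (fun a => H a si) + (fun a => H a sj) = fun a => H a s)
    (lam : Fin k → ℝ) (h : Achievable G lam) :
    lam i + lam j ≤ 3 := by
  have hcol_ne_zero : ∀ t, (fun a => H a t) ≠ 0 :=
    H.transpose_ne_zero_of_card_eq (by simp [hn]) fun v hv => (hcols v hv).exists
  have hsisj : si ≠ sj := by
    rintro rfl
    simpa [hij] using congrFun (hsi.symm.trans hsj) i
  have hssi : s ≠ si := fun he => hcol_ne_zero sj <| by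
    simpa [he] using hs
  have hssj : s ≠ sj := fun he => hcol_ne_zero si <| by
    simpa [he] using hs
  have hmeet : ∀ i' ∈ ({i, j} : Finset (Fin k)), ∀ R, IsRecoverySet G i' R →
      ∃ v ∈ ({si, sj, s} : Finset (Fin n)), v ∈ R := by
    intro i' hi' R hR
    obtain rfl | rfl : i' = i ∨ i' = j := by simpa using hi'
    · exact hR.exists_mem_of_add_col_eq hspan hsi hs hsisj.symm hssi
    rw [insert_comm]
    exact hR.exists_mem_of_add_col_eq hspan hsj ((add_comm _ _).trans hs) hsisj hssj
  calc lam i + lam j = ∑ i' ∈ {i, j}, lam i' := (sum_pair hij).symm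
    _ ≤ #{si, sj, s} := h.sum_le_card _ _ hmeet
    _ ≤ 3 := by exact_mod_cast card_le_three

/-- Let `G` be any generator matrix of `Ham(r,2)` (rows spanning the kernel
of the parity-check matrix `H`) containing systematic columns `e_i` (at node `si`) and `e_j`
(at node `sj`) for two data symbols `i ≠ j`, and let `s` be the node with `v_si + v_sj = v_s`
in `H`. Then every achievable demand vector satisfies `λ_i + λ_j ≤ 3`. -/
theorem stmt14 {r n k : ℕ} (hn : n = 2 ^ r - 1) (hk : k = 2 ^ r - 1 - r)
    (H : Matrix (Fin r) (Fin n) (ZMod 2))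
    (hcols : ∀ v : Fin r → ZMod 2, v ≠ 0 → ∃! j : Fin n, (fun a => H a j) = v)
    (G : Matrix (Fin k) (Fin n) (ZMod 2))
    (hspan : Submodule.span (ZMod 2) (Set.range G) = LinearMap.ker H.mulVecLin)
    (i j : Fin k) (hij : i ≠ j) (si sj s : Fin n)
    (hsi : (fun b => G b si) = Pi.single i 1)
    (hsj : (fun b => G b sj) = Pi.single j 1)
    (hs : (fun a => H a si) + (fun a => H a sj) = fun a => H a s)
    (lam : Fin k → ℝ) (h : Achievable G lam) :
    lam i + lam j ≤ 3 :=
  stmt14_general hn H hcols G hspan i j hij si sj s hsi hsj hs lam h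
end

section
/- Let G be the systematic generator matrix of Ham(r,2), r > 3, with parity-check matrix H, and let I be a set of systematic (data) coordinates with |I| ≥ 2 and Σ_{j∈I} v_j = 0 in F_2^r. Then every recovery set of every data symbol i ∈ I contains some element of I, so I itself is a vertex cover of the partial recovery hypergraph, and every achievable demand supported on I satisfies Σ_{i∈I} λ_i ≤ |I|. -/
/-!
The indicator vector `d` of the systematic nodes `S '' I` satisfies `H d = ∑_{a ∈ I} v_{S a} = 0`,
so `d` is a codeword, and since the code is systematic, `d = t G` where `t = d ∘ S` is the
indicator of `I`. The functional `x ↦ t ⬝ᵥ x` sends the column of node `j` to `d j`: it kills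
every column outside `S '' I` but not `e_i` for `i ∈ I`, so a recovery set of `i` must meet
`S '' I`. The demand bound is then the vertex-cover bound, each covering node carrying load at
most `1`.
-/

open Matrix

section

variable {k n : ℕ} {F : Type*} [Field F] {G : Matrix (Fin k) (Fin n) F}

theorem IsRecoverySet.eq_zero_of_vecMul_eq_zero {i : Fin k} {R : Finset (Fin n)}
    (hR : IsRecoverySet G i R) {t : Fin k → F} (ht : ∀ j ∈ R, (t ᵥ* G) j = 0) : t i = 0 := by
  have hspan : Submodule.span F ((fun j => fun a => G a j) '' (R : Set (Fin n))) ≤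
      LinearMap.ker (dotProductBilin F F t) := by
    rw [Submodule.span_le]
    rintro _ ⟨j, hj, rfl⟩
    exact ht j hj
  simpa using hspan hR

theorem Achievable.sum_le_card_of_forall_exists_mem {lam : Fin k → ℝ} (h : Achievable G lam)
    {I : Finset (Fin k)} {V : Finset (Fin n)}
    (hV : ∀ i ∈ I, ∀ R, IsRecoverySet G i R → ∃ v ∈ V, v ∈ R) :
    ∑ i ∈ I, lam i ≤ V.card := by
  obtain ⟨w, hw_nonneg, hw_rec, hw_sum, hw_load⟩ := h
  have hload_nonneg : ∀ v i R, 0 ≤ if v ∈ R then w i R else 0 := fun v i R => by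
    split_ifs
    exacts [hw_nonneg i R, le_rfl]
  have hcover : ∀ i ∈ I, ∀ R, w i R ≤ ∑ v ∈ V, if v ∈ R then w i R else 0 := by
    intro i hi R
    by_cases hzero : w i R = 0
    · simp [hzero]
    · obtain ⟨v, hvV, hvR⟩ := hV i hi R (hw_rec i R hzero)
      simpa [hvR] using Finset.single_le_sum (fun v _ => hload_nonneg v i R) hvV
  calc ∑ i ∈ I, lam i = ∑ i ∈ I, ∑ R, w i R := Finset.sum_congr rfl fun i _ => (hw_sum i).symm
    _ ≤ ∑ i ∈ I, ∑ R, ∑ v ∈ V, if v ∈ R then w i R else 0 :=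
        Finset.sum_le_sum fun i hi => Finset.sum_le_sum fun R _ => hcover i hi R
    _ = ∑ v ∈ V, ∑ i ∈ I, ∑ R, if v ∈ R then w i R else 0 := by
        simp_rw [Finset.sum_comm (s := Finset.univ) (t := V), Finset.sum_comm (s := I) (t := V)]
    _ ≤ ∑ v ∈ V, ∑ i, ∑ R, if v ∈ R then w i R else 0 :=
        Finset.sum_le_sum fun v _ => Finset.sum_le_sum_of_subset_of_nonneg I.subset_univ
          fun i _ _ => Finset.sum_nonneg fun R _ => hload_nonneg v i R
    _ ≤ ∑ v ∈ V, (1 : ℝ) := Finset.sum_le_sum fun v _ => hw_load v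
    _ = V.card := by simp

variable {S : Fin k → Fin n}

theorem injective_of_systematic
    (hS : ∀ a : Fin k, (fun b => G b (S a)) = Pi.single a 1) : Function.Injective S := by
  intro a a' h
  by_contra hne
  have h_one : G a (S a) = 1 := by simpa using congrFun (hS a) a
  have h_zero : G a (S a') = 0 := by simpa [hne] using congrFun (hS a') a
  rw [h, h_zero] at h_one
  exact zero_ne_one h_one

theorem vecMul_apply_of_systematic
    (hS : ∀ a : Fin k, (fun b => G b (S a)) = Pi.single a 1) (t : Fin k → F) (a : Fin k) :
    (t ᵥ* G) (S a) = t a := by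
  change t ⬝ᵥ (fun b => G b (S a)) = t a
  rw [hS a, dotProduct_single, mul_one]

theorem vecMul_comp_eq_of_mem_span
    (hS : ∀ a : Fin k, (fun b => G b (S a)) = Pi.single a 1) {x : Fin n → F}
    (hx : x ∈ Submodule.span F (Set.range G)) : (fun a => x (S a)) ᵥ* G = x := by
  obtain ⟨t, rfl⟩ : x ∈ LinearMap.range G.vecMulLinear := by rwa [range_vecMulLinear]
  simp only [vecMulLinear_apply, vecMul_apply_of_systematic hS]

end

theorem stmt15_general {r n k : ℕ}
    (H : Matrix (Fin r) (Fin n) (ZMod 2))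
    (G : Matrix (Fin k) (Fin n) (ZMod 2))
    (hspan : Submodule.span (ZMod 2) (Set.range G) = LinearMap.ker H.mulVecLin)
    (S : Fin k → Fin n)
    (hS : ∀ a : Fin k, (fun b => G b (S a)) = Pi.single a 1)
    (I : Finset (Fin k))
    (hsum : (∑ a ∈ I, fun b => H b (S a)) = (0 : Fin r → ZMod 2)) :
    (∀ i ∈ I, ∀ R : Finset (Fin n), IsRecoverySet G i R → ∃ a ∈ I, S a ∈ R) ∧
      (∀ lam : Fin k → ℝ, Achievable G lam → (∀ m ∉ I, lam m = 0) →
        ∑ i ∈ I, lam i ≤ (I.card : ℝ)) := by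
  set d : Fin n → ZMod 2 := ∑ a ∈ I, Pi.single (S a) 1 with hd
  have hd_mem : d ∈ Submodule.span (ZMod 2) (Set.range G) := by
    rw [hspan, LinearMap.mem_ker, mulVecLin_apply, hd, mulVec_sum]
    simp only [mulVec_single_one]
    exact hsum
  have hd_apply : ∀ j, d j = ∑ a ∈ I, if S a = j then 1 else 0 := by
    intro j
    simp only [hd, Finset.sum_apply, Pi.single_apply, eq_comm]
  have cover : ∀ i ∈ I, ∀ R : Finset (Fin n), IsRecoverySet G i R → ∃ a ∈ I, S a ∈ R := by
    intro i hi R hR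
    by_contra! hR_avoid
    have hd_R : ∀ j ∈ R, ((fun a => d (S a)) ᵥ* G) j = 0 := by
      intro j hj
      rw [vecMul_comp_eq_of_mem_span hS hd_mem, hd_apply]
      exact Finset.sum_eq_zero fun a ha => if_neg fun h : S a = j => hR_avoid a ha (h ▸ hj)
    have hd_i : d (S i) = 1 := by
      simp [hd_apply, (injective_of_systematic hS).eq_iff, hi]
    exact one_ne_zero (hd_i ▸ hR.eq_zero_of_vecMul_eq_zero hd_R)
  refine ⟨cover, fun lam hlam _ => ?_⟩
  calc ∑ i ∈ I, lam i ≤ (I.image S).card :=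
        hlam.sum_le_card_of_forall_exists_mem fun i hi R hR => by
          obtain ⟨a, ha, haR⟩ := cover i hi R hR
          exact ⟨S a, Finset.mem_image_of_mem S ha, haR⟩
    _ ≤ I.card := by exact_mod_cast Finset.card_image_le

/-- Let `G` be the systematic generator matrix of `Ham(r,2)`, `r > 3`, with
parity-check matrix `H`, and let `I` be a set of data coordinates with `|I| ≥ 2` and
`∑_{j ∈ I} v_{S j} = 0` in `F_2^r` (where `S a` is the systematic node of data symbol `a`).
Then every recovery set of every data symbol `i ∈ I` contains the systematic node of some
element of `I` (so `I` is a vertex cover of the partial recovery hypergraph), and every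
achievable demand supported on `I` satisfies `∑_{i ∈ I} λ_i ≤ |I|`. -/
theorem stmt15 {r n k : ℕ} (hr : 3 < r) (hn : n = 2 ^ r - 1) (hk : k = 2 ^ r - 1 - r)
    (H : Matrix (Fin r) (Fin n) (ZMod 2))
    (hcols : ∀ v : Fin r → ZMod 2, v ≠ 0 → ∃! j : Fin n, (fun a => H a j) = v)
    (G : Matrix (Fin k) (Fin n) (ZMod 2))
    (hspan : Submodule.span (ZMod 2) (Set.range G) = LinearMap.ker H.mulVecLin)
    (S : Fin k → Fin n)
    (hS : ∀ a : Fin k, (fun b => G b (S a)) = Pi.single a 1)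
    (I : Finset (Fin k)) (hI : 2 ≤ I.card)
    (hsum : (∑ a ∈ I, fun b => H b (S a)) = (0 : Fin r → ZMod 2)) :
    (∀ i ∈ I, ∀ R : Finset (Fin n), IsRecoverySet G i R → ∃ a ∈ I, S a ∈ R) ∧
      (∀ lam : Fin k → ℝ, Achievable G lam → (∀ m ∉ I, lam m = 0) →
        ∑ i ∈ I, lam i ≤ (I.card : ℝ)) :=
  stmt15_general H G hspan S hS I hsum
end

section
/- In a systematic binary Hamming code Ham(r,2) with r ≥ 3, the number of minimum non-singleton recovery sets containing exactly t non-systematic (parity) nodes, over all data symbols, is C(r,t)·(2^{r−1} − t) for 1 ≤ t ≤ r. -/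
/-!
Over `𝔽₂` a minimal recovery set `R` for `i` is a set of columns of `G` summing to `eᵢ` with no
nonempty zero subsum. The systematic columns are unit vectors, so `R` is determined by its parity
part `T`: writing `supp T` for the support of the sum of the columns in `T`, necessarily
`i ∈ supp T` and `R = T ∪ S (supp T \ {i})`. Conversely this set is minimal as soon as
`|supp T'| ≥ |supp T|` for every nonempty `T' ⊆ T`, since a zero subsum with parity part `T'` would
contain `S (supp T')` inside `S (supp T \ {i})`.

For the Hamming code the parity columns of `H` form a basis of `𝔽₂ʳ`, and `∑ j ∈ T, G a j` is the
value at the column `S a` of the functional `φ_T` summing the `T`-coordinates in this basis. The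
`2^(r-1)` vectors with `φ_T = 1` are columns of `H`: the `|T|` parity columns of `T` and the
columns `S a` with `a ∈ supp T`. Hence `|supp T| = 2^(r-1) - |T|`, and summing over the `C(r,t)`
choices of `T` gives the count.
-/

open Finset Function
open scoped Matrix

lemma ZMod.two_add_ite_eq_zero_iff {p : Prop} [Decidable p] {x : ZMod 2} :
    x + (if p then 1 else 0) = 0 ↔ (x = 1 ↔ p) := by
  by_cases hp : p <;> simp only [hp, if_true, if_false, iff_true, iff_false] <;> revert x <;> decide

lemma mem_span_image_iff_exists_sum_eq {ι M : Type*} [AddCommMonoid M] [Module (ZMod 2) M]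
    [DecidableEq ι] (v : ι → M) (R : Finset ι) (x : M) :
    x ∈ Submodule.span (ZMod 2) (v '' R) ↔ ∃ R' ⊆ R, ∑ j ∈ R', v j = x := by
  constructor
  · intro hx
    obtain ⟨l, hl, rfl⟩ := (Finsupp.mem_span_image_iff_linearCombination _).1 hx
    refine ⟨l.support, fun j hj => (Finsupp.mem_supported _ l).1 hl hj, ?_⟩
    rw [Finsupp.linearCombination_apply, Finsupp.sum]
    refine sum_congr rfl fun j hj => ?_
    have h01 : ∀ c : ZMod 2, c ≠ 0 → c = 1 := by decide
    rw [h01 _ (Finsupp.mem_support_iff.1 hj), one_smul]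
  · rintro ⟨R', hR', rfl⟩
    exact Submodule.sum_mem _ fun j hj => Submodule.subset_span ⟨j, hR' hj, rfl⟩

lemma isMinRecoverySet_iff {k n : ℕ} {G : Matrix (Fin k) (Fin n) (ZMod 2)} {i : Fin k}
    {R : Finset (Fin n)} :
    IsMinRecoverySet G i R ↔
      (∀ a, ∑ j ∈ R, G a j = (Pi.single i 1 : Fin k → ZMod 2) a) ∧
        ∀ D ⊆ R, D.Nonempty → ∃ a, ∑ j ∈ D, G a j ≠ 0 := by
  set col : Fin n → Fin k → ZMod 2 := fun j a => G a j
  have hcoord (D : Finset (Fin n)) (a : Fin k) : ∑ j ∈ D, G a j = (∑ j ∈ D, col j) a :=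
    (Finset.sum_apply a D col).symm
  simp only [hcoord, ← funext_iff, ← Function.ne_iff, ← Pi.zero_def]
  have hrec (R₀ : Finset (Fin n)) :
      IsRecoverySet G i R₀ ↔ ∃ R' ⊆ R₀, ∑ j ∈ R', col j = Pi.single i 1 :=
    mem_span_image_iff_exists_sum_eq col R₀ _
  have hsplit {D R₀ : Finset (Fin n)} (hD : D ⊆ R₀) :
      ∑ j ∈ R₀ \ D, col j + ∑ j ∈ D, col j = ∑ j ∈ R₀, col j := sum_sdiff hD
  constructor
  · rintro ⟨hR, hmin⟩
    obtain ⟨R', hR', hsum⟩ := (hrec R).1 hR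
    obtain rfl : R' = R := by
      by_contra hne
      exact hmin R' (Finset.ssubset_iff_subset_ne.2 ⟨hR', hne⟩)
        ((hrec R').2 ⟨R', subset_rfl, hsum⟩)
    refine ⟨hsum, fun D hD hDne hzero => hmin (R' \ D) (sdiff_ssubset hD hDne) ?_⟩
    refine (hrec _).2 ⟨R' \ D, subset_rfl, ?_⟩
    rw [← hsum, ← hsplit hD, hzero, add_zero]
  · rintro ⟨hsum, hind⟩
    refine ⟨(hrec R).2 ⟨R, subset_rfl, hsum⟩, fun R' hR' hR'rec => ?_⟩
    obtain ⟨R'', hR'', hsum''⟩ := (hrec R').1 hR'rec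
    have hsub : R'' ⊆ R := hR''.trans hR'.subset
    refine hind (R \ R'') sdiff_subset ?_ ?_
    · exact sdiff_nonempty.2 fun h => hR'.not_subset (h.trans hR'')
    · rw [← add_eq_right (b := ∑ j ∈ R'', col j), hsplit hsub, hsum, hsum'']

section Systematic

variable {k n : ℕ}

def IsSystematic {R : Type*} [Zero R] [One R] (G : Matrix (Fin k) (Fin n) R)
    (S : Fin k → Fin n) : Prop :=
  ∀ a, (fun b => G b (S a)) = Pi.single a 1

def parityPart (S : Fin k → Fin n) (R : Finset (Fin n)) : Finset (Fin n) :=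
  R.filter fun j => ∀ a, S a ≠ j

def colSumSupport (G : Matrix (Fin k) (Fin n) (ZMod 2)) (T : Finset (Fin n)) : Finset (Fin k) :=
  univ.filter fun a => ∑ j ∈ T, G a j = 1

def recoverySetOf (G : Matrix (Fin k) (Fin n) (ZMod 2)) (S : Fin k → Fin n)
    (T : Finset (Fin n)) (i : Fin k) : Finset (Fin n) :=
  T ∪ ((colSumSupport G T).erase i).image S

variable {G : Matrix (Fin k) (Fin n) (ZMod 2)} {S : Fin k → Fin n}

lemma IsSystematic.apply_eq (hS : IsSystematic G S) (a b : Fin k) :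
    G a (S b) = if a = b then 1 else 0 :=
  (congrFun (hS b) a).trans (Pi.single_apply b 1 a)

lemma IsSystematic.injective (hS : IsSystematic G S) : Injective S := by
  intro a b hab
  have h := hS.apply_eq a b
  rw [← hab, hS.apply_eq, if_pos rfl] at h
  by_contra hne
  exact one_ne_zero (h.trans (if_neg hne))

lemma mem_parityPart {R : Finset (Fin n)} {j : Fin n} :
    j ∈ parityPart S R ↔ j ∈ R ∧ ∀ a, S a ≠ j :=
  mem_filter

lemma parityPart_mono {R R' : Finset (Fin n)} (h : R ⊆ R') : parityPart S R ⊆ parityPart S R' :=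
  filter_subset_filter _ h

lemma card_parityPart_univ (hS : IsSystematic G S) : #(parityPart S univ) = n - k := by
  have h : parityPart S univ = univ \ univ.image S := by
    ext j
    simp [mem_parityPart]
  rw [h, card_sdiff_of_subset (subset_univ _), card_image_of_injective _ hS.injective,
    card_univ, card_univ, Fintype.card_fin, Fintype.card_fin]

lemma eq_of_parityPart_eq {R R' : Finset (Fin n)} (hpar : parityPart S R = parityPart S R')
    (hsys : ∀ a, S a ∈ R ↔ S a ∈ R') : R = R' := by
  ext j
  by_cases hj : ∀ a, S a ≠ j
  · simpa [mem_parityPart, hj] using congrArg (j ∈ ·) hpar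
  · obtain ⟨a, rfl⟩ := not_forall_not.1 hj
    exact hsys a

lemma sum_smul_eq_sum_parityPart_add {M : Type*} [AddCommMonoid M] [Module (ZMod 2) M]
    (hS : IsSystematic G S) (f : Fin n → M) (D : Finset (Fin n)) (a : Fin k) :
    ∑ j ∈ D, G a j • f j = ∑ j ∈ parityPart S D, G a j • f j + if S a ∈ D then f (S a) else 0 := by
  rw [← sum_filter_add_sum_filter_not D fun j => ∀ b, S b ≠ j]
  congr 1
  have hsys : ∀ j ∈ D.filter (fun j => ¬ ∀ b, S b ≠ j),
      G a j • f j = if S a = j then f j else 0 := by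
    intro j hj
    obtain ⟨b, rfl⟩ : ∃ b, S b = j := by simpa using (mem_filter.1 hj).2
    by_cases hab : a = b
    · simp [hS.apply_eq, hab]
    · simp [hS.apply_eq, hab, hS.injective.ne hab]
  rw [sum_congr rfl hsys, sum_ite_eq]
  simp

lemma sum_eq_sum_parityPart_add (hS : IsSystematic G S) (D : Finset (Fin n)) (a : Fin k) :
    ∑ j ∈ D, G a j = ∑ j ∈ parityPart S D, G a j + if S a ∈ D then 1 else 0 := by
  simpa using sum_smul_eq_sum_parityPart_add hS (fun _ => (1 : ZMod 2)) D a

lemma nonempty_of_mem_colSumSupport {T : Finset (Fin n)} {i : Fin k}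
    (hi : i ∈ colSumSupport G T) : T.Nonempty := by
  rw [nonempty_iff_ne_empty]
  rintro rfl
  simp [colSumSupport] at hi

section RecoverySetOf

variable {T : Finset (Fin n)} {i : Fin k}

lemma systematic_not_mem (hT : T ⊆ parityPart S univ) (a : Fin k) : S a ∉ T :=
  fun h => (mem_parityPart.1 (hT h)).2 a rfl

lemma disjoint_image_systematic (hT : T ⊆ parityPart S univ) (s : Finset (Fin k)) :
    Disjoint T (s.image S) := by
  refine disjoint_left.2 fun j hjT hjS => ?_
  obtain ⟨a, -, rfl⟩ := mem_image.1 hjS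
  exact systematic_not_mem hT a hjT

lemma parityPart_recoverySetOf (hT : T ⊆ parityPart S univ) :
    parityPart S (recoverySetOf G S T i) = T := by
  ext j
  simp only [mem_parityPart, recoverySetOf, mem_union, mem_image]
  constructor
  · rintro ⟨hj | ⟨a, -, rfl⟩, hpar⟩
    · exact hj
    · exact absurd rfl (hpar a)
  · intro hj
    exact ⟨Or.inl hj, (mem_parityPart.1 (hT hj)).2⟩

lemma systematic_mem_recoverySetOf (hS : IsSystematic G S)
    (hT : T ⊆ parityPart S univ) {a : Fin k} :
    S a ∈ recoverySetOf G S T i ↔ a ≠ i ∧ a ∈ colSumSupport G T := by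
  simp [recoverySetOf, systematic_not_mem hT a, hS.injective.eq_iff, and_comm]

lemma card_recoverySetOf (hS : IsSystematic G S) (hT : T ⊆ parityPart S univ)
    (hi : i ∈ colSumSupport G T) :
    #(recoverySetOf G S T i) + 1 = #T + #(colSumSupport G T) := by
  rw [recoverySetOf, card_union_of_disjoint (disjoint_image_systematic hT _),
    card_image_of_injective _ hS.injective, add_assoc, card_erase_add_one hi]

end RecoverySetOf

lemma eq_recoverySetOf_of_isMinRecoverySet (hS : IsSystematic G S) {i : Fin k}
    {R : Finset (Fin n)} (hR : IsMinRecoverySet G i R) (hcard : 1 < #R) :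
    i ∈ colSumSupport G (parityPart S R) ∧ R = recoverySetOf G S (parityPart S R) i := by
  obtain ⟨hsum, hind⟩ := isMinRecoverySet_iff.1 hR
  have hcoord (a : Fin k) : ∑ j ∈ parityPart S R, G a j + (if S a ∈ R then 1 else 0) =
      (Pi.single i 1 : Fin k → ZMod 2) a := by
    rw [← sum_eq_sum_parityPart_add hS, hsum]
  have hSi : S i ∉ R := by
    intro hSi
    obtain ⟨a, ha⟩ := hind (R.erase (S i)) (erase_subset _ _)
      ((one_lt_card_iff_nontrivial.1 hcard).erase_nonempty)
    rw [sum_erase_eq_sub hSi, hsum, ← congrFun (hS i) a, sub_self] at ha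
    exact ha rfl
  have hi : i ∈ colSumSupport G (parityPart S R) := by
    simpa [colSumSupport, hSi] using hcoord i
  have hT : parityPart S R ⊆ parityPart S univ := parityPart_mono (subset_univ R)
  refine ⟨hi, eq_of_parityPart_eq (parityPart_recoverySetOf hT).symm fun a => ?_⟩
  rw [systematic_mem_recoverySetOf hS hT]
  by_cases hai : a = i
  · subst hai
    simp [hSi]
  · have h := hcoord a
    rw [Pi.single_eq_of_ne hai, ZMod.two_add_ite_eq_zero_iff] at h
    simp [hai, colSumSupport, h]

lemma isMinRecoverySet_recoverySetOf (hS : IsSystematic G S) {T : Finset (Fin n)}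
    {i : Fin k} (hT : T ⊆ parityPart S univ) (hi : i ∈ colSumSupport G T)
    (hmono : ∀ T' ⊆ T, T'.Nonempty → #(colSumSupport G T) ≤ #(colSumSupport G T')) :
    IsMinRecoverySet G i (recoverySetOf G S T i) := by
  refine isMinRecoverySet_iff.2 ⟨fun a => ?_, fun D hD hDne => ?_⟩
  · rw [sum_eq_sum_parityPart_add hS, parityPart_recoverySetOf hT]
    simp only [systematic_mem_recoverySetOf hS hT]
    by_cases hai : a = i
    · subst hai
      simpa [colSumSupport] using hi
    · rw [Pi.single_eq_of_ne hai, ZMod.two_add_ite_eq_zero_iff]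
      simp [hai, colSumSupport]
  · by_contra! hzero
    have hDT : parityPart S D ⊆ T := parityPart_recoverySetOf hT ▸ parityPart_mono hD
    have hsuppD : ∀ a, a ∈ colSumSupport G (parityPart S D) ↔ S a ∈ D := by
      intro a
      have h := hzero a
      rw [sum_eq_sum_parityPart_add hS, ZMod.two_add_ite_eq_zero_iff] at h
      simpa [colSumSupport] using h
    have hsub : colSumSupport G (parityPart S D) ⊆ (colSumSupport G T).erase i := by
      intro a ha
      have := (systematic_mem_recoverySetOf hS hT).1 (hD ((hsuppD a).1 ha))
      exact mem_erase.2 this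
    by_cases hDpar : (parityPart S D).Nonempty
    · have h1 := hmono _ hDT hDpar
      have h2 := card_le_card hsub
      rw [card_erase_of_mem hi] at h2
      have h3 := card_pos.2 ⟨i, hi⟩
      omega
    · rw [not_nonempty_iff_eq_empty] at hDpar
      refine hDne.ne_empty (eq_of_parityPart_eq (hDpar.trans (by simp [parityPart])) fun a => ?_)
      rw [← hsuppD, hDpar]
      simp [colSumSupport]

lemma minRecoverySets_eq_biUnion (hS : IsSystematic G S) {c : ℕ}
    (hc : 2 < c) (hsupp : ∀ T ⊆ parityPart S univ, T.Nonempty → #(colSumSupport G T) + #T = c)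
    (t : ℕ) :
    {p : Fin k × Finset (Fin n) | IsMinRecoverySet G p.1 p.2 ∧ 1 < #p.2 ∧ #(parityPart S p.2) = t}
      = ↑(((parityPart S univ).powersetCard t).biUnion fun T =>
          (colSumSupport G T).image fun i => (i, recoverySetOf G S T i)) := by
  ext ⟨i, R⟩
  simp only [Set.mem_ofPred_eq, coe_biUnion, coe_image, Set.mem_iUnion, Set.mem_image,
    mem_coe, mem_powersetCard, Prod.mk.injEq, exists_prop]
  constructor
  · rintro ⟨hR, hcard, rfl⟩
    obtain ⟨hi, hReq⟩ := eq_recoverySetOf_of_isMinRecoverySet hS hR hcard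
    exact ⟨parityPart S R, ⟨parityPart_mono (subset_univ R), rfl⟩, i, hi, rfl, hReq.symm⟩
  · rintro ⟨T, ⟨hT, rfl⟩, i, hi, rfl, rfl⟩
    have hmono (T' : Finset (Fin n)) (hT' : T' ⊆ T) (hne : T'.Nonempty) :
        #(colSumSupport G T) ≤ #(colSumSupport G T') := by
      have := card_le_card hT'
      have := hsupp T hT (hne.mono hT')
      have := hsupp T' (hT'.trans hT) hne
      omega
    have hcard := card_recoverySetOf hS hT hi
    have hc' := hsupp T hT (nonempty_of_mem_colSumSupport hi)
    exact ⟨isMinRecoverySet_recoverySetOf hS hT hi hmono, by omega,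
      by rw [parityPart_recoverySetOf hT]⟩

theorem ncard_minRecoverySets (hS : IsSystematic G S) {c : ℕ}
    (hc : 2 < c) (hsupp : ∀ T ⊆ parityPart S univ, T.Nonempty → #(colSumSupport G T) + #T = c)
    {t : ℕ} (ht : 1 ≤ t) :
    {p : Fin k × Finset (Fin n) |
        IsMinRecoverySet G p.1 p.2 ∧ 1 < #p.2 ∧ #(parityPart S p.2) = t}.ncard
      = (#(parityPart S univ)).choose t * (c - t) := by
  rw [minRecoverySets_eq_biUnion hS hc hsupp, Set.ncard_coe_finset, card_biUnion]
  · rw [← card_powersetCard, card_eq_sum_ones, sum_mul, one_mul]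
    refine sum_congr rfl fun T hT => ?_
    obtain ⟨hTP, rfl⟩ := mem_powersetCard.1 hT
    rw [card_image_of_injective _ fun _ _ h => (Prod.mk.inj h).1, ← hsupp T hTP
      (card_pos.1 (by omega)), Nat.add_sub_cancel]
  · intro T₁ hT₁ T₂ hT₂ hne
    refine disjoint_left.2 fun p hp₁ hp₂ => hne ?_
    obtain ⟨i₁, -, rfl⟩ := mem_image.1 hp₁
    obtain ⟨i₂, -, hp⟩ := mem_image.1 hp₂
    rw [← parityPart_recoverySetOf (G := G) (i := i₁) (mem_powersetCard.1 hT₁).1,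
      ← parityPart_recoverySetOf (G := G) (i := i₂) (mem_powersetCard.1 hT₂).1, (Prod.mk.inj hp).2]

end Systematic

lemma two_mul_card_filter_eq_one {V F : Type*} [AddCommGroup V] [Fintype V] [DecidableEq V]
    [FunLike F V (ZMod 2)] [AddMonoidHomClass F V (ZMod 2)] (φ : F) {x : V} (hx : φ x = 1) :
    2 * #(univ.filter fun v => φ v = 1) = Fintype.card V := by
  have hzero_one : #(univ.filter fun v => φ v = 0) = #(univ.filter fun v => φ v = 1) :=
    card_equiv (Equiv.addRight x) fun v => by
      simp only [mem_filter, mem_univ, true_and, Equiv.coe_addRight, map_add, hx]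
      exact (add_eq_right).symm
  have hne_one : ∀ y : ZMod 2, ¬ y = 1 ↔ y = 0 := by decide
  have h := card_filter_add_card_filter_not (s := univ) fun v => φ v = 1
  simp only [hne_one, hzero_one, card_univ] at h
  omega

section Hamming

variable {r k n : ℕ} {H : Matrix (Fin r) (Fin n) (ZMod 2)}

lemma injective_col (hn : n = 2 ^ r - 1)
    (hcols : ∀ v : Fin r → ZMod 2, v ≠ 0 → ∃ j, (fun a => H a j) = v) :
    Injective fun j a => H a j := by
  have hsub : univ.filter (fun v : Fin r → ZMod 2 => v ≠ 0) ⊆ univ.image fun j a => H a j := by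
    intro v hv
    obtain ⟨j, hj⟩ := hcols v (mem_filter.1 hv).2
    exact mem_image.2 ⟨j, mem_univ j, hj⟩
  have hcard : #(univ.image fun j a => H a j) = #(univ : Finset (Fin n)) := by
    refine le_antisymm card_image_le ?_
    simpa [filter_ne', hn] using card_le_card hsub
  exact Set.injOn_univ.1 (by simpa using card_image_iff.1 hcard)

lemma card_filter_eq_one_eq_card_filter_col
    (hcols : ∀ v : Fin r → ZMod 2, v ≠ 0 → ∃ j, (fun a => H a j) = v)
    (hinj : Injective fun j a => H a j) (φ : (Fin r → ZMod 2) →ₗ[ZMod 2] ZMod 2) :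
    #(univ.filter fun v => φ v = 1) = #(univ.filter fun j => φ (fun c => H c j) = 1) := by
  rw [← card_image_of_injective _ hinj]
  congr 1
  ext v
  simp only [mem_filter, mem_univ, true_and, mem_image]
  constructor
  · intro hv
    obtain ⟨j, rfl⟩ := hcols v fun h => by simp [h] at hv
    exact ⟨j, hv, rfl⟩
  · rintro ⟨j, hj, rfl⟩
    exact hj

variable {G : Matrix (Fin k) (Fin n) (ZMod 2)} {S : Fin k → Fin n}

lemma col_systematic_eq_sum (hG : ∀ a, H *ᵥ G a = 0) (hS : IsSystematic G S) (a : Fin k) :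
    (fun c => H c (S a)) = ∑ j ∈ parityPart S univ, G a j • fun c => H c j := by
  have hrow : ∑ j, G a j • (fun c => H c j) = 0 := by
    ext c
    simpa [Matrix.mulVec, dotProduct, mul_comm, Finset.sum_apply] using congrFun (hG a) c
  rw [sum_smul_eq_sum_parityPart_add hS, if_pos (mem_univ _), add_eq_zero_iff_eq_neg'] at hrow
  rw [hrow, ZModModule.neg_eq_self]

lemma top_le_span_col_parityPart (hcols : ∀ v : Fin r → ZMod 2, v ≠ 0 → ∃ j, (fun a => H a j) = v)
    (hG : ∀ a, H *ᵥ G a = 0) (hS : IsSystematic G S) :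
    ⊤ ≤ Submodule.span (ZMod 2) (Set.range fun j : parityPart S univ => fun c => H c j) := by
  intro v _
  by_cases hv : v = 0
  · exact hv ▸ Submodule.zero_mem _
  obtain ⟨j, rfl⟩ := hcols v hv
  by_cases hj : ∀ a, S a ≠ j
  · exact Submodule.subset_span ⟨⟨j, mem_parityPart.2 ⟨mem_univ j, hj⟩⟩, rfl⟩
  · obtain ⟨a, rfl⟩ := not_forall_not.1 hj
    rw [col_systematic_eq_sum hG hS a]
    exact Submodule.sum_mem _ fun j hj =>
      Submodule.smul_mem _ _ (Submodule.subset_span ⟨⟨j, hj⟩, rfl⟩)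

lemma exists_linearMap_col_parityPart
    (hcols : ∀ v : Fin r → ZMod 2, v ≠ 0 → ∃ j, (fun a => H a j) = v)
    (hG : ∀ a, H *ᵥ G a = 0) (hS : IsSystematic G S)
    (hP : #(parityPart S univ) = r) (T : Finset (Fin n)) :
    ∃ φ : (Fin r → ZMod 2) →ₗ[ZMod 2] ZMod 2,
      ∀ j ∈ parityPart S univ, φ (fun c => H c j) = if j ∈ T then 1 else 0 := by
  let B := basisOfTopLeSpanOfCardEqFinrank _ (top_le_span_col_parityPart hcols hG hS)
    (by simp [hP])
  refine ⟨B.constr (ZMod 2) fun j => if j.1 ∈ T then 1 else 0, fun j hj => ?_⟩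
  have hB : (fun c => H c j) = B ⟨j, hj⟩ := by
    simp [B, coe_basisOfTopLeSpanOfCardEqFinrank]
  rw [hB, B.constr_basis]

section Functional

variable {T : Finset (Fin n)} {φ : (Fin r → ZMod 2) →ₗ[ZMod 2] ZMod 2}

lemma apply_col_systematic (hG : ∀ a, H *ᵥ G a = 0) (hS : IsSystematic G S)
    (hT : T ⊆ parityPart S univ)
    (hφ : ∀ j ∈ parityPart S univ, φ (fun c => H c j) = if j ∈ T then 1 else 0) (a : Fin k) :
    φ (fun c => H c (S a)) = ∑ j ∈ T, G a j := by
  rw [col_systematic_eq_sum hG hS a, map_sum]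
  simp only [map_smul, smul_eq_mul]
  rw [sum_congr rfl fun j hj => by rw [hφ j hj, mul_ite, mul_one, mul_zero], sum_ite_mem,
    inter_eq_right.2 hT]

lemma filter_apply_col_eq_one (hG : ∀ a, H *ᵥ G a = 0) (hS : IsSystematic G S)
    (hT : T ⊆ parityPart S univ)
    (hφ : ∀ j ∈ parityPart S univ, φ (fun c => H c j) = if j ∈ T then 1 else 0) :
    univ.filter (fun j => φ (fun c => H c j) = 1) = T ∪ (colSumSupport G T).image S := by
  ext j
  by_cases hj : ∀ a, S a ≠ j
  · simp [hφ j (mem_parityPart.2 ⟨mem_univ j, hj⟩), hj]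
  · obtain ⟨a, rfl⟩ := not_forall_not.1 hj
    simp [apply_col_systematic hG hS hT hφ, systematic_not_mem hT a, colSumSupport,
      hS.injective.eq_iff]

end Functional

theorem card_colSumSupport_add_card
    (hcols : ∀ v : Fin r → ZMod 2, v ≠ 0 → ∃ j, (fun a => H a j) = v)
    (hinj : Injective fun j a => H a j) (hG : ∀ a, H *ᵥ G a = 0)
    (hS : IsSystematic G S) (hP : #(parityPart S univ) = r)
    {T : Finset (Fin n)} (hT : T ⊆ parityPart S univ) (hne : T.Nonempty) :
    #(colSumSupport G T) + #T = 2 ^ (r - 1) := by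
  obtain ⟨φ, hφ⟩ := exists_linearMap_col_parityPart hcols hG hS hP T
  obtain ⟨x, hx⟩ := hne
  have hhalf := two_mul_card_filter_eq_one φ (x := fun c => H c x) (by simp [hφ x (hT hx), hx])
  rw [card_filter_eq_one_eq_card_filter_col hcols hinj, filter_apply_col_eq_one hG hS hT hφ,
    card_union_of_disjoint (disjoint_image_systematic hT _),
    card_image_of_injective _ hS.injective] at hhalf
  have hpow : Fintype.card (Fin r → ZMod 2) = 2 * 2 ^ (r - 1) := by
    have hr : 0 < r := hP ▸ card_pos.2 ⟨x, hT hx⟩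
    rw [← pow_succ', Nat.sub_add_cancel hr]
    simp
  omega

end Hamming

theorem stmt17_general {r n k : ℕ} (hr : 3 ≤ r) (hn : n = 2 ^ r - 1) (hk : k = 2 ^ r - 1 - r)
    (H : Matrix (Fin r) (Fin n) (ZMod 2))
    (hcols : ∀ v : Fin r → ZMod 2, v ≠ 0 → ∃! j : Fin n, (fun a => H a j) = v)
    (G : Matrix (Fin k) (Fin n) (ZMod 2))
    (hspan : Submodule.span (ZMod 2) (Set.range G) = LinearMap.ker H.mulVecLin)
    (S : Fin k → Fin n)
    (hS : ∀ a : Fin k, (fun b => G b (S a)) = Pi.single a 1)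
    (t : ℕ) (ht1 : 1 ≤ t) :
    {p : Fin k × Finset (Fin n) |
        IsMinRecoverySet G p.1 p.2 ∧ 1 < p.2.card ∧
        (p.2.filter fun j => ∀ a : Fin k, S a ≠ j).card = t}.ncard
      = r.choose t * (2 ^ (r - 1) - t) := by
  have hcols' (v : Fin r → ZMod 2) (hv : v ≠ 0) : ∃ j, (fun a => H a j) = v := (hcols v hv).exists
  have hG (a : Fin k) : H *ᵥ G a = 0 :=
    LinearMap.mem_ker.1 (hspan ▸ Submodule.subset_span (Set.mem_range_self a))
  have hP : #(parityPart S univ) = r := by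
    have := r.lt_two_pow_self
    rw [card_parityPart_univ hS]
    omega
  have hc : 2 < 2 ^ (r - 1) :=
    calc 2 < 2 ^ 2 := by norm_num
      _ ≤ 2 ^ (r - 1) := Nat.pow_le_pow_right two_pos (by omega)
  have := ncard_minRecoverySets hS hc (fun T hT hne => card_colSumSupport_add_card hcols'
    (injective_col hn hcols') hG hS hP hT hne) ht1
  rwa [hP] at this

/-- In a systematic binary Hamming code `Ham(r,2)` with `r ≥ 3`, the number
of minimum non-singleton recovery sets containing exactly `t` non-systematic (parity) nodes,
counted over all data symbols (i.e. as pairs of a data symbol and a recovery set for it),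
is `C(r,t) · (2^(r-1) - t)` for `1 ≤ t ≤ r`. -/
theorem stmt17 {r n k : ℕ} (hr : 3 ≤ r) (hn : n = 2 ^ r - 1) (hk : k = 2 ^ r - 1 - r)
    (H : Matrix (Fin r) (Fin n) (ZMod 2))
    (hcols : ∀ v : Fin r → ZMod 2, v ≠ 0 → ∃! j : Fin n, (fun a => H a j) = v)
    (G : Matrix (Fin k) (Fin n) (ZMod 2))
    (hspan : Submodule.span (ZMod 2) (Set.range G) = LinearMap.ker H.mulVecLin)
    (S : Fin k → Fin n)
    (hS : ∀ a : Fin k, (fun b => G b (S a)) = Pi.single a 1)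
    (t : ℕ) (ht1 : 1 ≤ t) (ht2 : t ≤ r) :
    {p : Fin k × Finset (Fin n) |
        IsMinRecoverySet G p.1 p.2 ∧ 1 < p.2.card ∧
        (p.2.filter fun j => ∀ a : Fin k, S a ≠ j).card = t}.ncard
      = r.choose t * (2 ^ (r - 1) - t) :=
  stmt17_general hr hn hk H hcols G hspan S hS t ht1
end
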